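/- arXiv:quant-ph/0703113 — 10 statements merged into one kernel-verified Lean document; each statement's English description precedes it below -/
import Mathlib

section
/- The polynomial generator matrix G(D) = Σ_{i=0}^m H̃_i D^i is non-catastrophic: if u : ℤ → F^κ is a Laurent input sequence (i.e., there is r₀ ∈ ℤ with u_i = 0 for all i < r₀) and the output sequence v : ℤ → F^n defined by v_i = Σ_{s=0}^m u_{i−s} H̃_s has finite support {i ∈ ℤ : v_i ≠ 0}, then the support {i ∈ ℤ : u_i ≠ 0} of u is also finite. -/
/-- **Non-catastrophicity of the encoder `G(D) = ∑ H̃ᵢ Dⁱ`.**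
If the nonzero rows of `H̃₀, …, H̃ₘ` taken together are linearly independent,
`H̃₀` has no zero row, `u : ℤ → F^κ` is a Laurent input sequence, and the
output sequence `v i = ∑_{s=0}^m u_{i-s} H̃ₛ` has finite support, then `u`
has finite support as well. -/
theorem convolutional_encoder_noncatastrophic
    {F : Type*} [Field F] [Fintype F] {n κ m : ℕ} (hn : 0 < n) (hκ : 0 < κ)
    (H : Fin (m + 1) → Matrix (Fin κ) (Fin n) F)
    (hind : LinearIndependent F
      (fun p : {p : Fin (m + 1) × Fin κ // H p.1 p.2 ≠ 0} => H p.1.1 p.1.2))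
    (h0 : ∀ j : Fin κ, H 0 j ≠ 0)
    (u : ℤ → Fin κ → F) (r₀ : ℤ) (hu : ∀ i : ℤ, i < r₀ → u i = 0)
    (v : ℤ → Fin n → F)
    (hv : ∀ i : ℤ, v i = ∑ s : Fin (m + 1), Matrix.vecMul (u (i - (s : ℕ))) (H s))
    (hfin : {i : ℤ | v i ≠ 0}.Finite) :
    {i : ℤ | u i ≠ 0}.Finite := by
  classical
  apply hfin.subset
  intro i hi
  simp only [Set.mem_setOf_eq] at hi ⊢
  intro hvi
  apply hi
  funext j
  have h1 : ∑ p : Fin (m + 1) × Fin κ, u (i - (p.1 : ℕ)) p.2 • H p.1 p.2 = 0 := by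
    rw [Fintype.sum_prod_type]
    have hvm : ∀ s : Fin (m + 1), ∑ k : Fin κ, u (i - (s : ℕ)) k • H s k
        = Matrix.vecMul (u (i - (s : ℕ))) (H s) := by
      intro s
      funext c
      simp [Matrix.vecMul, dotProduct, Finset.sum_apply]
    simp_rw [hvm]
    rw [← hv i, hvi]
  have h2 : ∑ p : {p : Fin (m + 1) × Fin κ // H p.1 p.2 ≠ 0},
      u (i - (p.1.1 : ℕ)) p.1.2 • H p.1.1 p.1.2 = 0 := by
    rw [← Finset.sum_subtype (Finset.univ.filter fun p : Fin (m + 1) × Fin κ => H p.1 p.2 ≠ 0)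
      (by simp) (fun p => u (i - (p.1 : ℕ)) p.2 • H p.1 p.2)]
    rw [Finset.sum_filter_of_ne (fun p _ hne => by
      intro h; exact hne (by rw [h, smul_zero])), h1]
  have := Fintype.linearIndependent_iff.mp hind
    (fun p => u (i - (p.1.1 : ℕ)) p.1.2) h2 ⟨(0, j), h0 j⟩
  simpa using this
end

section
/- The matrix G(D) = Σ_{i=0}^m H̃_i D^i ∈ F[D]^{κ×n} is a basic generator matrix; in particular, it admits a polynomial right inverse: there exists a matrix K(D) ∈ F[D]^{n×κ} with G(D)·K(D) equal to the κ×κ identity matrix over F[D]. -/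
/-!
Since the nonzero rows of all the `H̃ᵢ` are linearly independent, they admit a dual family of
linear forms. Collecting, as columns, the forms dual to the rows of `H̃₀` gives a constant matrix
`B` with `H̃₀ B = 1` and `H̃ᵢ B = 0` for `i > 0`, so `G(D) B = ∑ Dⁱ H̃ᵢ B = 1`.
-/

open Polynomial

theorem LinearIndependent.exists_dual_eq_ite {K V ι : Type*} [Field K] [AddCommGroup V]
    [Module K V] [DecidableEq ι] {v : ι → V} (hv : LinearIndependent K v) :
    ∃ f : ι → Module.Dual K V, ∀ i j, f i (v j) = if j = i then 1 else 0 := by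
  obtain ⟨g, hg⟩ := LinearMap.exists_leftInverse_of_injective (Finsupp.linearCombination K v)
    (LinearMap.ker_eq_bot.mpr hv)
  refine ⟨fun i => (Finsupp.lapply i).comp g, fun i j => ?_⟩
  have hgv : g (v j) = Finsupp.single j 1 := by
    simpa using LinearMap.congr_fun hg (Finsupp.single j 1)
  simp [hgv, Finsupp.single_apply]

theorem Matrix.exists_mul_eq_one_of_linearIndependent_row {K m n : Type*} [Field K]
    [Fintype n] [DecidableEq m] {A : Matrix m n K} (hA : LinearIndependent K A.row) :
    ∃ B : Matrix n m K, A * B = 1 := by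
  classical
  obtain ⟨f, hf⟩ := hA.exists_dual_eq_ite
  refine ⟨Matrix.of fun k i => f i (Pi.single k 1), Matrix.ext fun i j => ?_⟩
  have hrow : f j (A i) = ∑ k, A i k * f j (Pi.single k 1) := by
    conv_lhs => rw [← Finset.univ_sum_single (A i)]
    refine (map_sum _ _ _).trans (Finset.sum_congr rfl fun k _ => ?_)
    rw [← smul_eq_mul, ← map_smul, ← Pi.single_smul', smul_eq_mul, mul_one]
  simpa [Matrix.mul_apply, Matrix.one_apply, ← hrow] using (A.row_apply' i ▸ hf j i)

theorem Matrix.exists_mul_eq_ite_of_linearIndependent_nonzero_rows {K ι l n : Type*} [Field K]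
    [Fintype n] [DecidableEq ι] [DecidableEq l] {H : ι → Matrix l n K} (i₀ : ι)
    (hind : LinearIndependent K (fun p : {p : ι × l // H p.1 p.2 ≠ 0} => H p.1.1 p.1.2))
    (h0 : ∀ j, H i₀ j ≠ 0) :
    ∃ B : Matrix n l K, ∀ i, H i * B = if i = i₀ then 1 else 0 := by
  obtain ⟨B, hB⟩ := Matrix.exists_mul_eq_one_of_linearIndependent_row
    (A := Matrix.of fun p : {p : ι × l // H p.1 p.2 ≠ 0} => H p.1.1 p.1.2) hind
  refine ⟨B.submatrix id fun j => ⟨(i₀, j), h0 j⟩, fun i => ?_⟩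
  split_ifs with hi
  · subst hi
    ext j j'
    simpa [Matrix.mul_apply, Matrix.one_apply] using congr_fun₂ hB ⟨(i, j), h0 j⟩ ⟨(i, j'), h0 j'⟩
  · ext j j'
    by_cases hij : H i j = 0
    · simp [Matrix.mul_apply, hij]
    · simpa [Matrix.mul_apply, Matrix.one_apply, hi] using
        congr_fun₂ hB ⟨(i, j), hij⟩ ⟨(i₀, j'), h0 j'⟩

theorem Matrix.map_C_mul_X_pow_mul_map_C {R l m n : Type*} [CommSemiring R] [Fintype m]
    (A : Matrix l m R) (B : Matrix m n R) (k : ℕ) :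
    (A.map fun a => C a * X ^ k) * B.map C = (A * B).map fun a => C a * X ^ k := by
  refine Matrix.ext fun i j => ?_
  simp only [Matrix.mul_apply, Matrix.map_apply, map_sum, map_mul, Finset.sum_mul]
  exact Finset.sum_congr rfl fun _ _ => by ring

theorem convolutional_generator_basic_general
    {F : Type*} [Field F] {n κ m : ℕ}
    (H : Fin (m + 1) → Matrix (Fin κ) (Fin n) F)
    (hind : LinearIndependent F
      (fun p : {p : Fin (m + 1) × Fin κ // H p.1 p.2 ≠ 0} => H p.1.1 p.1.2))
    (h0 : ∀ j : Fin κ, H 0 j ≠ 0)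
    (G : Matrix (Fin κ) (Fin n) (Polynomial F))
    (hG : G = ∑ i : Fin (m + 1), (H i).map (fun a => Polynomial.C a * Polynomial.X ^ (i : ℕ))) :
    ∃ K : Matrix (Fin n) (Fin κ) (Polynomial F), G * K = 1 := by
  obtain ⟨B, hB⟩ := Matrix.exists_mul_eq_ite_of_linearIndependent_nonzero_rows 0 hind h0
  refine ⟨B.map C, ?_⟩
  rw [hG, Matrix.sum_mul]
  simp only [Matrix.map_C_mul_X_pow_mul_map_C, hB]
  rw [Finset.sum_eq_single 0 (fun i _ hi => by simp [hi]) (by simp)]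
  simp

/-- **`G(D) = ∑ H̃ᵢ Dⁱ` is a basic generator matrix:** it has a polynomial
right inverse `K(D)` with `G(D)·K(D) = 1`. -/
theorem convolutional_generator_basic
    {F : Type*} [Field F] [Fintype F] {n κ m : ℕ} (hn : 0 < n) (hκ : 0 < κ)
    (H : Fin (m + 1) → Matrix (Fin κ) (Fin n) F)
    (hind : LinearIndependent F
      (fun p : {p : Fin (m + 1) × Fin κ // H p.1 p.2 ≠ 0} => H p.1.1 p.1.2))
    (h0 : ∀ j : Fin κ, H 0 j ≠ 0)
    (G : Matrix (Fin κ) (Fin n) (Polynomial F))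
    (hG : G = ∑ i : Fin (m + 1), (H i).map (fun a => Polynomial.C a * Polynomial.X ^ (i : ℕ))) :
    ∃ K : Matrix (Fin n) (Fin κ) (Polynomial F), G * K = 1 :=
  convolutional_generator_basic_general H hind h0 G hG
end

section
/- If the block code C contains its Euclidean dual, i.e., C^⊥ ⊆ C, then the convolutional code V is self-orthogonal, V ⊆ V^⊥: for all u(D), w(D) ∈ F[D]^κ, the codewords v(D) = u(D)G(D) and x(D) = w(D)G(D) satisfy ⟨v(D), x(D)⟩ = Σ_t v_t · x_t = 0, where v_t, x_t ∈ F^n denote the coefficient vectors of D^t. -/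
/-!
Every row of every `H̃ₖ` lies in `C^⊥ ⊆ C`, so all rows of all the `H̃ᵢ` are pairwise orthogonal,
and hence so is their span. The coefficient `v_t = ∑ᵢ u_{t-i} H̃ᵢ` of a codeword lies in this span,
so every summand `v_t · x_t` of the inner product vanishes.
-/

section

open Matrix Polynomial Submodule

variable {R : Type*} [CommSemiring R] {ι κ n : Type*}

theorem dotProduct_row_eq_zero_of_dual_le [Fintype n] (H : ι → Matrix κ n R)
    (hdual : ∀ w : n → R, (∀ c : n → R, (∀ i, H i *ᵥ c = 0) → w ⬝ᵥ c = 0) →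
      ∀ i, H i *ᵥ w = 0)
    (i k : ι) (r s : κ) : H i r ⬝ᵥ H k s = 0 := by
  have hrow_dual : ∀ c : n → R, (∀ i, H i *ᵥ c = 0) → H k s ⬝ᵥ c = 0 :=
    fun c hc => congrFun (hc k) s
  exact congrFun (hdual (H k s) hrow_dual i) r

theorem dotProduct_eq_zero_of_mem_span [Fintype n] {s : Set (n → R)}
    (hs : ∀ a ∈ s, ∀ b ∈ s, a ⬝ᵥ b = 0) {v w : n → R}
    (hv : v ∈ span R s) (hw : w ∈ span R s) : v ⬝ᵥ w = 0 := by
  induction hv using span_induction with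
  | mem a ha =>
    induction hw using span_induction with
    | mem b hb => exact hs a ha b hb
    | zero => exact dotProduct_zero a
    | add b c _ _ hb hc => rw [dotProduct_add, hb, hc, add_zero]
    | smul c b _ hb => rw [dotProduct_smul, hb, smul_zero]
  | zero => exact zero_dotProduct w
  | add a b _ _ ha hb => rw [add_dotProduct, ha, hb, add_zero]
  | smul c a _ ha => rw [smul_dotProduct, ha, smul_zero]

theorem vecMul_mem_span_rows [Fintype κ] (H : ι → Matrix κ n R) (i : ι) (v : κ → R) :
    v ᵥ* H i ∈ span R (Set.range fun q : ι × κ => H q.1 q.2) := by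
  rw [vecMul_eq_sum]
  exact sum_mem fun r _ => smul_mem _ _ (subset_span ⟨(i, r), rfl⟩)

/-- The coefficient vector `v_t` of `v(D) = ∑ₜ v_t Dᵗ`. -/
def coeffVec (v : n → R[X]) (t : ℕ) : n → R := fun j => (v j).coeff t

theorem coeffVec_sum (s : Finset ι) (v : ι → n → R[X]) (t : ℕ) :
    coeffVec (∑ i ∈ s, v i) t = ∑ i ∈ s, coeffVec (v i) t := by
  ext j
  simp only [coeffVec, Finset.sum_apply, finsetSum_coeff]

theorem coeffVec_vecMul_map_C_mul [Fintype κ] (u : κ → R[X]) (M : Matrix κ n R) (p : R[X])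
    (t : ℕ) : coeffVec (u ᵥ* M.map fun a => C a * p) t = (fun r => (u r * p).coeff t) ᵥ* M := by
  ext j
  simp only [coeffVec, vecMul, dotProduct, map_apply, finsetSum_coeff]
  refine Finset.sum_congr rfl fun r _ => ?_
  rw [mul_left_comm, coeff_C_mul, mul_comm]

theorem coeffVec_vecMul_mem_span_rows [Fintype ι] [Fintype κ] (H : ι → Matrix κ n R)
    (p : ι → R[X]) (u : κ → R[X]) (t : ℕ) :
    coeffVec (u ᵥ* ∑ i, (H i).map fun a => C a * p i) t ∈
      span R (Set.range fun q : ι × κ => H q.1 q.2) := by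
  rw [vecMul_sum, coeffVec_sum]
  exact sum_mem fun i _ => coeffVec_vecMul_map_C_mul u (H i) (p i) t ▸ vecMul_mem_span_rows H i _

end

theorem convolutional_code_euclidean_self_orthogonal_general
    {F : Type*} [Field F] {n κ m : ℕ}
    (H : Fin (m + 1) → Matrix (Fin κ) (Fin n) F)
    (hdual : ∀ w : Fin n → F,
      (∀ c : Fin n → F, (∀ i, (H i).mulVec c = 0) → dotProduct w c = 0) →
      (∀ i, (H i).mulVec w = 0))
    (G : Matrix (Fin κ) (Fin n) (Polynomial F))
    (hG : G = ∑ i : Fin (m + 1), (H i).map (fun a => Polynomial.C a * Polynomial.X ^ (i : ℕ)))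
    (u w : Fin κ → Polynomial F) :
    ∑ᶠ t : ℕ, ∑ j : Fin n,
      ((Matrix.vecMul u G) j).coeff t * ((Matrix.vecMul w G) j).coeff t = 0 := by
  have hrows : ∀ a ∈ Set.range (fun q : Fin (m + 1) × Fin κ => H q.1 q.2),
      ∀ b ∈ Set.range (fun q : Fin (m + 1) × Fin κ => H q.1 q.2), dotProduct a b = 0 := by
    rintro _ ⟨⟨i, r⟩, rfl⟩ _ ⟨⟨k, s⟩, rfl⟩
    exact dotProduct_row_eq_zero_of_dual_le H hdual i k r s
  have hcoeff (t : ℕ) :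
      dotProduct (coeffVec (Matrix.vecMul u G) t) (coeffVec (Matrix.vecMul w G) t) = 0 := by
    subst hG
    exact dotProduct_eq_zero_of_mem_span hrows (coeffVec_vecMul_mem_span_rows H _ u t)
      (coeffVec_vecMul_mem_span_rows H _ w t)
  exact finsum_eq_zero_of_forall_eq_zero hcoeff

/-- **Euclidean self-orthogonality of the convolutional code.**
If the block code `C = {v : vᵀ·H̃ᵢᵗ = 0 ∀i}` contains its Euclidean dual,
then the convolutional code `V = {u(D)G(D)}` with `G(D) = ∑ H̃ᵢ Dⁱ`
satisfies `V ⊆ V^⊥`: any two codewords have vanishing Euclidean inner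
product `∑ₜ vₜ · xₜ = 0`. -/
theorem convolutional_code_euclidean_self_orthogonal
    {F : Type*} [Field F] [Fintype F] {n κ m : ℕ} (hn : 0 < n) (hκ : 0 < κ)
    (H : Fin (m + 1) → Matrix (Fin κ) (Fin n) F)
    (hind : LinearIndependent F
      (fun p : {p : Fin (m + 1) × Fin κ // H p.1 p.2 ≠ 0} => H p.1.1 p.1.2))
    (h0 : ∀ j : Fin κ, H 0 j ≠ 0)
    (hdual : ∀ w : Fin n → F,
      (∀ c : Fin n → F, (∀ i, (H i).mulVec c = 0) → dotProduct w c = 0) →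
      (∀ i, (H i).mulVec w = 0))
    (G : Matrix (Fin κ) (Fin n) (Polynomial F))
    (hG : G = ∑ i : Fin (m + 1), (H i).map (fun a => Polynomial.C a * Polynomial.X ^ (i : ℕ)))
    (u w : Fin κ → Polynomial F) :
    ∑ᶠ t : ℕ, ∑ j : Fin n,
      ((Matrix.vecMul u G) j).coeff t * ((Matrix.vecMul w G) j).coeff t = 0 :=
  convolutional_code_euclidean_self_orthogonal_general H hdual G hG u w
end

section
/- Suppose F = F_{q²} is a finite field of square order. If the block code C contains its Hermitian dual, i.e., C^{⊥ₕ} ⊆ C, then the convolutional code V is Hermitian self-orthogonal, V ⊆ V^{⊥ₕ}: for all u(D), w(D) ∈ F_{q²}[D]^κ, the codewords v(D) = u(D)G(D) and x(D) = w(D)G(D) satisfy ⟨v(D), x(D)⟩ₕ = Σ_t Σ_{j=1}^n v_{t,j} · (x_{t,j})^q = 0, where v_t, x_t ∈ F_{q²}^n denote the coefficient vectors of D^t. -/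
/-- **Hermitian self-orthogonality of the convolutional code.**
Over `F = 𝔽_{q²}`, if the block code `C = {v : vᵀ·H̃ᵢᵗ = 0 ∀i}` contains its
Hermitian dual, then the convolutional code `V = {u(D)G(D)}` with
`G(D) = ∑ H̃ᵢ Dⁱ` satisfies `V ⊆ V^{⊥ₕ}`: any two codewords have vanishing
Hermitian inner product `∑ₜ ∑ⱼ v_{t,j} (x_{t,j})^q = 0`. -/
theorem convolutional_code_hermitian_self_orthogonal
    {F : Type*} [Field F] [Fintype F] {q : ℕ}
    (hq : ∃ p k : ℕ, p.Prime ∧ 0 < k ∧ q = p ^ k)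
    (hcard : Fintype.card F = q ^ 2)
    {n κ m : ℕ} (hn : 0 < n) (hκ : 0 < κ)
    (H : Fin (m + 1) → Matrix (Fin κ) (Fin n) F)
    (hind : LinearIndependent F
      (fun p : {p : Fin (m + 1) × Fin κ // H p.1 p.2 ≠ 0} => H p.1.1 p.1.2))
    (h0 : ∀ j : Fin κ, H 0 j ≠ 0)
    (hdual : ∀ w : Fin n → F,
      (∀ c : Fin n → F, (∀ i, (H i).mulVec c = 0) → ∑ j, w j * (c j) ^ q = 0) →
      (∀ i, (H i).mulVec w = 0))
    (G : Matrix (Fin κ) (Fin n) (Polynomial F))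
    (hG : G = ∑ i : Fin (m + 1), (H i).map (fun a => Polynomial.C a * Polynomial.X ^ (i : ℕ)))
    (u w : Fin κ → Polynomial F) :
    ∑ᶠ t : ℕ, ∑ j : Fin n,
      ((Matrix.vecMul u G) j).coeff t * (((Matrix.vecMul w G) j).coeff t) ^ q = 0 := by
  classical
  obtain ⟨p, k, hp, hk, hqe⟩ := hq
  -- characteristic
  haveI := ringChar.charP F
  have hrp : (ringChar F).Prime := CharP.char_is_prime F (ringChar F)
  obtain ⟨d, -, hd2⟩ := FiniteField.card F (ringChar F)
  have hpe : p = ringChar F := by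
    have hdvd : p ∣ ringChar F ^ (d : ℕ) := by
      rw [← hd2, hcard, hqe, ← pow_mul]
      exact dvd_pow_self p (by positivity)
    exact (Nat.prime_dvd_prime_iff_eq hp hrp).mp (hp.dvd_of_dvd_pow hdvd)
  haveI hcp : CharP F p := hpe ▸ ringChar.charP F
  haveI : ExpChar F p := ExpChar.prime hp
  -- key orthogonality lemma
  have hrow : ∀ (c : Fin n → F), (∀ i, (H i).mulVec c = 0) →
      ∀ (i : Fin (m + 1)) (a : Fin κ), ∑ j, H i a j * c j = 0 := by
    intro c hc i a
    have := congrFun (hc i) a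
    simpa [Matrix.mulVec, dotProduct] using this
  have key : ∀ (y : Fin κ → Polynomial F) (t : ℕ) (c : Fin n → F),
      (∀ i, (H i).mulVec c = 0) →
      ∑ j, ((Matrix.vecMul y G) j).coeff t * c j = 0 := by
    intro y t c hc
    have rearr : ∀ (j : Fin n) (a : Fin κ) (i : Fin (m + 1)),
        (y a * (Polynomial.C (H i a j) * Polynomial.X ^ (i : ℕ))).coeff t * c j
          = ((y a * Polynomial.X ^ (i : ℕ)).coeff t) * (H i a j * c j) := by
      intro j a i
      rw [show y a * (Polynomial.C (H i a j) * Polynomial.X ^ (i : ℕ))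
            = Polynomial.C (H i a j) * (y a * Polynomial.X ^ (i : ℕ)) by ring,
          Polynomial.coeff_C_mul]
      ring
    simp only [hG, Matrix.vecMul, dotProduct, Matrix.sum_apply, Matrix.map_apply,
      Finset.mul_sum, Polynomial.finset_sum_coeff, Finset.sum_mul, rearr]
    rw [Finset.sum_comm]
    apply Finset.sum_eq_zero
    intro a _
    rw [Finset.sum_comm]
    apply Finset.sum_eq_zero
    intro i _
    rw [← Finset.mul_sum, hrow c hc i a, mul_zero]
  apply finsum_eq_zero_of_forall_eq_zero
  intro t
  have hxC : ∀ i, (H i).mulVec (fun j => ((Matrix.vecMul w G) j).coeff t ^ q) = 0 := by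
    apply hdual
    intro c hc
    have h1 := key w t c hc
    have h2 : ∑ j, ((Matrix.vecMul w G) j).coeff t ^ q * (c j) ^ q
        = (∑ j, ((Matrix.vecMul w G) j).coeff t * c j) ^ q := by
      rw [hqe, sum_pow_char_pow]
      simp [mul_pow]
    rw [h2, h1]
    exact zero_pow (hqe ▸ pow_ne_zero k hp.ne_zero)
  exact key u t _ hxC
end

section
/- Every codeword c ∈ C of the block code, viewed as the constant polynomial vector c(D) = c ∈ F[D]^n, belongs to the dual convolutional code V^⊥. Consequently, if C is nonzero, the free distance of V^⊥ (the least weight of a nonzero element of V^⊥) is at most d, the minimum Hamming distance of C. -/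
/-- The minimum Hamming distance of a (linear) code `C ⊆ Fⁿ`: the least
Hamming weight of a nonzero codeword. -/
noncomputable def minHammingDist {n : ℕ} {F : Type*} [Zero F] [DecidableEq F]
    (C : Set (Fin n → F)) : ℕ :=
  sInf {w : ℕ | ∃ v ∈ C, v ≠ 0 ∧ hammingNorm v = w}

/-- The weight of a vector of polynomials `c(D) ∈ F[D]ⁿ`: the sum over all `t`
of the Hamming weights of the coefficient vectors `cₜ ∈ Fⁿ`. -/
noncomputable def polyVecWeight {n : ℕ} {F : Type*} [Semiring F] [DecidableEq F]
    (c : Fin n → Polynomial F) : ℕ :=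
  ∑ᶠ t : ℕ, hammingNorm (fun j => (c j).coeff t)

/-!
A block codeword `c`, viewed as a constant polynomial vector, pairs with a polynomial vector `w`
only through the constant coefficient `w(0)`. For `w = u(D) G(D)` that constant coefficient is
`u(0) H̃₀`, and `c ⬝ᵥ u(0) H̃₀ = u(0) ⬝ᵥ H̃₀ c = 0`. So `c ↦ c(D)` embeds `C` into `V^⊥`, preserving
weight and nonvanishing, and a minimum-weight codeword of `C` bounds the free distance of `V^⊥`.
-/

open Polynomial Matrix

theorem map_constantCoeff_sum_map_C_mul_X_pow {R ι ι' : Type*} [Semiring R] {m : ℕ}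
    (H : Fin (m + 1) → Matrix ι' ι R) :
    (∑ i : Fin (m + 1), (H i).map (fun a => C a * X ^ (i : ℕ))).map constantCoeff = H 0 := by
  ext k j
  simp [Matrix.sum_apply, Fin.sum_univ_succ]

section

variable {R : Type*} {ι ι' : Type*} [Fintype ι]

theorem finsum_coeff_C_mul_coeff [Semiring R] (c : ι → R) (w : ι → R[X]) :
    ∑ᶠ t : ℕ, ∑ j, (C (c j)).coeff t * (w j).coeff t = c ⬝ᵥ fun j => (w j).coeff 0 := by
  rw [finsum_eq_single _ 0]
  · simp [dotProduct]
  · intro t ht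
    simp [coeff_C, ht]

variable [Fintype ι']

theorem finsum_coeff_C_mul_coeff_vecMul_eq_zero [CommSemiring R] {G : Matrix ι' ι R[X]}
    {H₀ : Matrix ι' ι R} (hG : G.map constantCoeff = H₀) {c : ι → R} (hc : H₀ *ᵥ c = 0)
    (u : ι' → R[X]) :
    ∑ᶠ t : ℕ, ∑ j, (C (c j)).coeff t * ((u ᵥ* G) j).coeff t = 0 := by
  have hcoeff : (fun j => ((u ᵥ* G) j).coeff 0) = (constantCoeff ∘ u) ᵥ* H₀ := by
    ext j
    rw [← constantCoeff_apply, RingHom.map_vecMul, hG]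
  rw [finsum_coeff_C_mul_coeff, hcoeff, dotProduct_comm, ← dotProduct_mulVec, hc,
    dotProduct_zero]

end

theorem polyVecWeight_C {R : Type*} [Semiring R] [DecidableEq R] {n : ℕ} (c : Fin n → R) :
    polyVecWeight (fun j => C (c j)) = hammingNorm c := by
  rw [polyVecWeight, finsum_eq_single _ 0]
  · simp
  · intro t ht
    simp [coeff_C, ht, Pi.zero_def]

theorem exists_hammingNorm_eq_minHammingDist {F : Type*} [Zero F] [DecidableEq F] {n : ℕ}
    {S : Set (Fin n → F)} (hS : ∃ v ∈ S, v ≠ 0) :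
    ∃ v ∈ S, v ≠ 0 ∧ hammingNorm v = minHammingDist S := by
  obtain ⟨v, hv, hv0⟩ := hS
  exact Nat.sInf_mem (s := {w | ∃ v ∈ S, v ≠ 0 ∧ hammingNorm v = w}) ⟨_, v, hv, hv0, rfl⟩

theorem dual_convolutional_code_free_distance_upper_bound_general
    {F : Type*} [Field F] [DecidableEq F] {n κ m : ℕ}
    (H : Fin (m + 1) → Matrix (Fin κ) (Fin n) F)
    (G : Matrix (Fin κ) (Fin n) (Polynomial F))
    (hG : G = ∑ i : Fin (m + 1), (H i).map (fun a => Polynomial.C a * Polynomial.X ^ (i : ℕ)))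
    (Vperp : Set (Fin n → Polynomial F))
    (hVperp : Vperp = {c : Fin n → Polynomial F | ∀ u : Fin κ → Polynomial F,
      ∑ᶠ t : ℕ, ∑ j : Fin n, (c j).coeff t * ((Matrix.vecMul u G) j).coeff t = 0}) :
    (∀ c : Fin n → F, (∀ i, (H i).mulVec c = 0) →
        (fun j => Polynomial.C (c j)) ∈ Vperp) ∧
    ((∃ c : Fin n → F, (∀ i, (H i).mulVec c = 0) ∧ c ≠ 0) →
      sInf {w : ℕ | ∃ cD ∈ Vperp, cD ≠ 0 ∧ polyVecWeight cD = w} ≤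
        minHammingDist {v : Fin n → F | ∀ i, (H i).mulVec v = 0}) := by
  have hmem : ∀ c : Fin n → F, (∀ i, H i *ᵥ c = 0) → (fun j => C (c j)) ∈ Vperp := by
    intro c hc
    rw [hVperp]
    exact finsum_coeff_C_mul_coeff_vecMul_eq_zero
      (hG ▸ map_constantCoeff_sum_map_C_mul_X_pow H) (hc 0)
  refine ⟨hmem, fun hC => ?_⟩
  obtain ⟨v, hv, hv0, hvw⟩ := exists_hammingNorm_eq_minHammingDist hC
  refine hvw ▸ Nat.sInf_le ⟨_, hmem v hv, ?_, polyVecWeight_C v⟩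
  simpa [funext_iff] using hv0

/-- **Upper bound on the free distance of the dual convolutional code.**
Every codeword `c ∈ C`, seen as a constant polynomial vector, lies in `V^⊥`;
hence (when `C ≠ 0`) the free distance of `V^⊥` is at most the minimum
distance `d` of the block code `C`. -/
theorem dual_convolutional_code_free_distance_upper_bound
    {F : Type*} [Field F] [Fintype F] [DecidableEq F] {n κ m : ℕ}
    (hn : 0 < n) (hκ : 0 < κ)
    (H : Fin (m + 1) → Matrix (Fin κ) (Fin n) F)
    (hind : LinearIndependent F
      (fun p : {p : Fin (m + 1) × Fin κ // H p.1 p.2 ≠ 0} => H p.1.1 p.1.2))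
    (h0 : ∀ j : Fin κ, H 0 j ≠ 0)
    (G : Matrix (Fin κ) (Fin n) (Polynomial F))
    (hG : G = ∑ i : Fin (m + 1), (H i).map (fun a => Polynomial.C a * Polynomial.X ^ (i : ℕ)))
    (Vperp : Set (Fin n → Polynomial F))
    (hVperp : Vperp = {c : Fin n → Polynomial F | ∀ u : Fin κ → Polynomial F,
      ∑ᶠ t : ℕ, ∑ j : Fin n, (c j).coeff t * ((Matrix.vecMul u G) j).coeff t = 0}) :
    (∀ c : Fin n → F, (∀ i, (H i).mulVec c = 0) →
        (fun j => Polynomial.C (c j)) ∈ Vperp) ∧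
    ((∃ c : Fin n → F, (∀ i, (H i).mulVec c = 0) ∧ c ≠ 0) →
      sInf {w : ℕ | ∃ cD ∈ Vperp, cD ≠ 0 ∧ polyVecWeight cD = w} ≤
        minHammingDist {v : Fin n → F | ∀ i, (H i).mulVec v = 0}) :=
  dual_convolutional_code_free_distance_upper_bound_general H G hG Vperp hVperp
end

section
/- Every nonzero codeword v(D) = u(D)G(D) of the convolutional code V has weight wt(v(D)) ≥ d^⊥, where d^⊥ is the minimum Hamming distance of the dual block code C^⊥, which equals the row span over F of all the rows of H̃_0, …, H̃_m. -/
/-- **Lower bound on the free distance of the convolutional code `V`.**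
Every nonzero codeword `v(D) = u(D)G(D)` of `V` has weight at least `d^⊥`,
the minimum distance of the dual block code `C^⊥`, which is the row span of
all the matrices `H̃ᵢ`. -/
theorem convolutional_code_weight_lower_bound
    {F : Type*} [Field F] [Fintype F] [DecidableEq F] {n κ m : ℕ}
    (hn : 0 < n) (hκ : 0 < κ)
    (H : Fin (m + 1) → Matrix (Fin κ) (Fin n) F)
    (hind : LinearIndependent F
      (fun p : {p : Fin (m + 1) × Fin κ // H p.1 p.2 ≠ 0} => H p.1.1 p.1.2))
    (h0 : ∀ j : Fin κ, H 0 j ≠ 0)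
    (G : Matrix (Fin κ) (Fin n) (Polynomial F))
    (hG : G = ∑ i : Fin (m + 1), (H i).map (fun a => Polynomial.C a * Polynomial.X ^ (i : ℕ)))
    (dperp : ℕ)
    (hdperp : dperp = minHammingDist
      ((Submodule.span F (Set.range fun p : Fin (m + 1) × Fin κ => H p.1 p.2) :
        Submodule F (Fin n → F)) : Set (Fin n → F)))
    (u : Fin κ → Polynomial F) (hu : Matrix.vecMul u G ≠ 0) :
    dperp ≤ polyVecWeight (Matrix.vecMul u G) := by

  set v := Matrix.vecMul u G with hv
  obtain ⟨j0, hj0⟩ : ∃ j, v j ≠ 0 := by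
    by_contra h; push_neg at h; exact hu (funext h)
  obtain ⟨t, ht⟩ : ∃ t, (v j0).coeff t ≠ 0 := by
    by_contra h; push_neg at h
    exact hj0 (Polynomial.ext fun n => by simp [h n])
  set vt : Fin n → F := fun j => (v j).coeff t with hvt
  have hcoe : ∀ j, v j = ∑ i, u i * (∑ k : Fin (m+1), Polynomial.C (H k i j) * Polynomial.X ^ (k : ℕ)) := by
    intro j
    rw [hv, hG]
    simp [Matrix.vecMul, dotProduct, Matrix.sum_apply]
  have hvt_eq : vt = ∑ i : Fin κ, ∑ k : Fin (m+1),
      (if (k : ℕ) ≤ t then (u i).coeff (t - (k : ℕ)) else 0) • H k i := by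
    funext j
    simp only [hvt, hcoe, Finset.sum_apply, Pi.smul_apply, smul_eq_mul]
    rw [Polynomial.finset_sum_coeff]
    refine Finset.sum_congr rfl fun i _ => ?_
    rw [Finset.mul_sum, Polynomial.finset_sum_coeff]
    refine Finset.sum_congr rfl fun k _ => ?_
    have : u i * (Polynomial.C (H k i j) * Polynomial.X ^ (k : ℕ))
        = (Polynomial.C (H k i j) * u i) * Polynomial.X ^ (k : ℕ) := by ring
    rw [this, Polynomial.coeff_mul_X_pow']
    split
    · rw [Polynomial.coeff_C_mul]; ring
    · rw [zero_mul]
  have hmem : vt ∈ (Submodule.span F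
      (Set.range fun p : Fin (m + 1) × Fin κ => H p.1 p.2)) := by
    rw [hvt_eq]
    refine Submodule.sum_mem _ fun i _ => Submodule.sum_mem _ fun k _ => ?_
    exact Submodule.smul_mem _ _ (Submodule.subset_span ⟨(k, i), rfl⟩)
  have hne : vt ≠ 0 := fun h => ht (congrFun h j0)
  have h1 : dperp ≤ hammingNorm vt := by
    rw [hdperp, minHammingDist]
    exact Nat.sInf_le ⟨vt, hmem, hne, rfl⟩
  have h2 : hammingNorm vt ≤ polyVecWeight v := by
    rw [polyVecWeight]
    refine single_le_finsum (f := fun s => hammingNorm fun j => (v j).coeff s) t ?_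
      (fun _ => Nat.zero_le _)
    refine Set.Finite.subset (Set.finite_Iic (Finset.univ.sup fun j => (v j).natDegree)) ?_
    intro s hs
    rw [Function.mem_support] at hs
    have hne2 : (fun j => (v j).coeff s) ≠ 0 := fun h => hs (hammingNorm_eq_zero.mpr h)
    obtain ⟨j, hj⟩ := Function.ne_iff.mp hne2
    have h1 : s ≤ (v j).natDegree := Polynomial.le_natDegree_of_ne_zero hj
    exact le_trans h1 (Finset.le_sup (f := fun j => (v j).natDegree) (Finset.mem_univ j))
  exact le_trans h1 h2
end

section
/- If β − α ≥ 2q − 3, then every nonzero codeword v ∈ C of the cyclic code with defining set Z = {z ∈ {0,…,n−1} : z ≡ x·q^i (mod n) for some integer i ≥ 0 and some x with α ≤ x ≤ β and x ≢ 0 (mod q)} has Hamming weight at least q + ⌊(β − α + 3)/q⌋ − 2. -/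
open Finset Polynomial Matrix

/-- Vandermonde-type vanishing: if a vector is orthogonal to all power rows, it is zero. -/
private lemma vand_aux {E : Type*} [Field E] {w : ℕ} {t b : Fin w → E}
    (ht : Function.Injective t)
    (h : ∀ i : Fin w, ∑ k, b k * t k ^ (i : ℕ) = 0) : b = 0 := by
  apply Matrix.eq_zero_of_mulVec_eq_zero
    (M := (Matrix.vandermonde t).transpose)
  · rw [Matrix.det_transpose]
    exact Matrix.det_vandermonde_ne_zero_iff.mpr ht
  · funext i
    simpa [Matrix.mulVec, Matrix.vandermonde, dotProduct, mul_comm] using h i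

/-- Core Hartmann–Tzeng-type linear-algebra bound. -/
private lemma ht_core {E : Type*} [Field E] {w q s : ℕ} (hq2 : 2 ≤ q) (hw1 : 1 ≤ w)
    {t b : Fin w → E} (ht : Function.Injective t)
    (htq : Function.Injective fun k => t k ^ q)
    (hb : ∀ k, b k ≠ 0)
    (hsyn : ∀ i1 i2 : ℕ, i1 ≤ q - 2 → i2 ≤ s → ∑ k, b k * t k ^ (i1 + q * i2) = 0) :
    q + s ≤ w := by
  classical
  by_contra hcon
  push_neg at hcon
  rcases lt_or_ge w q with hwq | hwq
  · -- BCH case `w ≤ q - 1`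
    have hb0 : b = 0 := vand_aux ht (fun i => by
      have hi := hsyn i 0 (by have := i.isLt; omega) (Nat.zero_le _)
      simpa using hi)
    exact hb ⟨0, hw1⟩ (by simp [hb0])
  · set m := w - q + 2 with hm
    have hq1w : q - 1 ≤ w := by omega
    let ι : Fin (q - 1) → Fin w := Fin.castLE hq1w
    have hιinj : Function.Injective ι := Fin.castLE_injective hq1w
    let φ : (Fin w → E) →ₗ[E] (Fin (q - 1) → E) :=
      { toFun := fun u i => ∑ k, u k * t k ^ (i : ℕ)
        map_add' := fun u u' => by
          funext i; simp [add_mul, Finset.sum_add_distrib]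
        map_smul' := fun cc u => by
          funext i; simp [Finset.mul_sum, mul_assoc] }
    have hφ : ∀ (u : Fin w → E) (i : Fin (q - 1)), φ u i = ∑ k, u k * t k ^ (i : ℕ) :=
      fun _ _ => rfl
    let σ := Function.ExtendByZero.linearMap E ι
    have hker : ∀ u, (φ.comp σ) u = 0 → u = 0 := by
      intro u hu
      have hcomp : ∀ i : Fin (q - 1),
          ∑ k : Fin (q - 1), u k * t (ι k) ^ (i : ℕ) = 0 := by
        intro i
        have h1 : (φ (σ u)) i = 0 := by
          rw [show φ (σ u) = (φ.comp σ) u from rfl, hu]; rfl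
        rw [hφ] at h1
        have h2 : ∑ k : Fin w, σ u k * t k ^ (i : ℕ)
            = ∑ k : Fin (q - 1), u k * t (ι k) ^ (i : ℕ) := by
          rw [← Finset.sum_subset
            (Finset.subset_univ ((univ : Finset (Fin (q - 1))).map ⟨ι, hιinj⟩))
            (fun k _ hk => ?_)]
          · rw [Finset.sum_map]
            refine Finset.sum_congr rfl fun k _ => ?_
            simp only [Function.Embedding.coeFn_mk, σ,
              Function.ExtendByZero.linearMap_apply,
              Function.Injective.extend_apply hιinj]
          · have hnk : ¬ ∃ a, ι a = k := by simpa [Finset.mem_map] using hk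
            simp only [σ, Function.ExtendByZero.linearMap_apply,
              Function.extend_apply' _ _ _ hnk, Pi.zero_apply, zero_mul]
        rw [← h2, h1]
      exact vand_aux (ht.comp hιinj) hcomp
    have hinj : Function.Injective (φ.comp σ) :=
      LinearMap.ker_eq_bot.mp (LinearMap.ker_eq_bot'.mpr hker)
    have hsurj : Function.Surjective φ := by
      have hs2 : Function.Surjective (φ.comp σ) :=
        LinearMap.injective_iff_surjective.mp hinj
      rw [LinearMap.coe_comp] at hs2
      exact hs2.of_comp
    have hrank := LinearMap.finrank_range_add_finrank_ker φ
    rw [LinearMap.range_eq_top.mpr hsurj, finrank_top,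
      Module.finrank_fintype_fun_eq_card, Module.finrank_fintype_fun_eq_card,
      Fintype.card_fin, Fintype.card_fin] at hrank
    have hmem : ∀ i2 : Fin m,
        (fun k => b k * (t k ^ q) ^ (i2 : ℕ)) ∈ LinearMap.ker φ := by
      intro i2
      rw [LinearMap.mem_ker]
      funext i1
      simp only [hφ, Pi.zero_apply]
      rw [← hsyn i1 i2 (by have := i1.isLt; omega) (by have := i2.isLt; omega)]
      exact Finset.sum_congr rfl fun k _ => by ring
    have hnli : ¬ LinearIndependent E
        (fun i2 : Fin m => (⟨_, hmem i2⟩ : LinearMap.ker φ)) := by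
      intro hli
      have hcard := hli.fintype_card_le_finrank
      rw [Fintype.card_fin] at hcard
      omega
    obtain ⟨g, hg0, i0, hgi0⟩ := Fintype.not_linearIndependent_iff.mp hnli
    have hcoord : ∀ k : Fin w,
        ∑ i2 : Fin m, g i2 * (b k * (t k ^ q) ^ (i2 : ℕ)) = 0 := by
      intro k
      have h1 := congrArg (fun x : LinearMap.ker φ => (x : Fin w → E) k) hg0
      simpa using h1
    -- the auxiliary polynomial
    set Λ : Polynomial E := ∑ i2 : Fin m, Polynomial.C (g i2) * Polynomial.X ^ (i2 : ℕ)
      with hΛ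
    have hΛeval : ∀ y : E, Λ.eval y = ∑ i2 : Fin m, g i2 * y ^ (i2 : ℕ) := by
      intro y
      rw [hΛ, Polynomial.eval_finset_sum]
      simp
    have hcoeff : Λ.coeff (i0 : ℕ) = g i0 := by
      rw [hΛ, Polynomial.finset_sum_coeff]
      rw [Finset.sum_eq_single i0 (fun i2 _ hne => ?_) (by simp)]
      · simp
      · have : (i0 : ℕ) ≠ (i2 : ℕ) := fun h => hne (Fin.ext h.symm)
        simp [Polynomial.coeff_C_mul, Polynomial.coeff_X_pow, this]
    have hΛne : Λ ≠ 0 := fun h0 => hgi0 (by rw [← hcoeff, h0, Polynomial.coeff_zero])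
    have hdeg : Λ.natDegree ≤ m - 1 := by
      rw [hΛ]
      refine Polynomial.natDegree_sum_le_of_forall_le _ _ (fun i2 _ => ?_)
      refine (Polynomial.natDegree_C_mul_le _ _).trans ?_
      rw [Polynomial.natDegree_X_pow]
      have := i2.isLt; omega
    have hroot : ∀ k : Fin w, Λ.eval (t k ^ q) = 0 := by
      intro k
      have h1 := hcoord k
      have h2 : b k * ∑ i2 : Fin m, g i2 * (t k ^ q) ^ (i2 : ℕ) = 0 := by
        rw [Finset.mul_sum, ← h1]
        exact Finset.sum_congr rfl fun i2 _ => by ring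
      rw [hΛeval]
      exact (mul_eq_zero.mp h2).resolve_left (hb k)
    have hcard : w ≤ m - 1 := by
      have hsub : (Finset.univ.image fun k : Fin w => t k ^ q) ⊆ Λ.roots.toFinset := by
        intro x hx
        simp only [Finset.mem_image] at hx
        obtain ⟨k, _, rfl⟩ := hx
        rw [Multiset.mem_toFinset, Polynomial.mem_roots hΛne]
        exact hroot k
      calc w = (Finset.univ.image fun k : Fin w => t k ^ q).card := by
              rw [Finset.card_image_of_injective _ htq, Finset.card_univ, Fintype.card_fin]
        _ ≤ Λ.roots.toFinset.card := Finset.card_le_card hsub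
        _ ≤ Multiset.card Λ.roots := Multiset.toFinset_card_le _
        _ ≤ Λ.natDegree := Polynomial.card_roots' Λ
        _ ≤ m - 1 := hdeg
    omega

/-- **Hartmann–Tzeng-type bound, case `β − α ≥ 2q − 3`.**
Let `C` be the cyclic code of length `n` over `F = 𝔽_q` with defining set
`Z = {z mod n : z ≡ x·qⁱ (mod n), α ≤ x ≤ β, q ∤ x}`. If `β − α ≥ 2q − 3`,
then every nonzero codeword of `C` has Hamming weight at least
`q + ⌊(β − α + 3)/q⌋ − 2`. -/
theorem cyclic_code_weight_bound_large_range
    {F E : Type*} [Field F] [Fintype F] [DecidableEq F] [Field E] [Algebra F E]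
    {q n : ℕ} (hq : Fintype.card F = q) (hn : 0 < n) (hgcd : Nat.gcd n q = 1)
    {α β : ℕ} (hα : 2 ≤ α) (hαβ : α ≤ β) (hβ : β < n)
    (γ : E) (hγ : IsPrimitiveRoot γ n)
    (hrange : 2 * q - 3 ≤ β - α)
    (v : Fin n → F)
    (hv : ∀ z : ℕ, z < n →
      (∃ x i : ℕ, α ≤ x ∧ x ≤ β ∧ ¬ q ∣ x ∧ z ≡ x * q ^ i [MOD n]) →
      ∑ j : Fin n, algebraMap F E (v j) * γ ^ ((j : ℕ) * z) = 0)
    (hv0 : v ≠ 0) :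
    q + (β - α + 3) / q - 2 ≤ hammingNorm v := by
  classical
  have hq2 : 2 ≤ q := by rw [← hq]; exact Fintype.one_lt_card
  have hγ0 : γ ≠ 0 := hγ.ne_zero hn.ne'
  -- arithmetic setup
  set f := (β - α + 3) / q with hf
  have hf2 : 2 ≤ f := (Nat.le_div_iff_mul_le (by omega)).mpr (by omega)
  set s := f - 2 with hs
  have hqf : f * q ≤ β - α + 3 := Nat.div_mul_le_self _ _
  have hqs : q * s + 2 * q ≤ β - α + 3 := by
    have hfs : f = s + 2 := by omega
    have h1 : f * q = q * s + 2 * q := by rw [hfs]; ring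
    omega
  -- choice of the starting point `c ≡ 1 (mod q)`
  obtain ⟨a, r, hrlt, har⟩ : ∃ a r, r < q ∧ q * a + r = α :=
    ⟨α / q, α % q, Nat.mod_lt _ (by omega), Nat.div_add_mod α q⟩
  set P := q * a with hP
  set c := if r ≤ 1 then P + 1 else P + q + 1 with hc
  have hcα : α ≤ c ∧ c ≤ α + q - 1 := by
    rw [hc]; split <;> omega
  -- the key properties of the window
  have hwindow : ∀ i1 i2 : ℕ, i1 ≤ q - 2 → i2 ≤ s →
      α ≤ c + i1 + q * i2 ∧ c + i1 + q * i2 ≤ β ∧ ¬ q ∣ (c + i1 + q * i2) := by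
    intro i1 i2 hi1 hi2
    have hmul : q * i2 ≤ q * s := Nat.mul_le_mul_left q hi2
    refine ⟨by omega, by omega, ?_⟩
    intro hdvd
    have hsplit : ∃ K, c + i1 + q * i2 = q * K + (1 + i1) := by
      rw [hc]; split
      · exact ⟨a + i2, by rw [hP]; ring⟩
      · exact ⟨a + 1 + i2, by rw [hP]; ring⟩
    obtain ⟨K, hK⟩ := hsplit
    rw [hK] at hdvd
    have h1 : q ∣ (1 + i1) := (Nat.dvd_add_right (Dvd.intro K rfl)).mp hdvd
    have h2 : q ≤ 1 + i1 := Nat.le_of_dvd (by omega) h1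
    omega
  -- support of the codeword
  set S : Finset (Fin n) := Finset.univ.filter (fun j => v j ≠ 0) with hS
  have hScard : S.card = hammingNorm v := rfl
  set w := S.card with hw
  have hw1 : 1 ≤ w := by
    obtain ⟨j, hj⟩ := Function.ne_iff.mp hv0
    exact Finset.card_pos.mpr ⟨j, by simp only [hS, Finset.mem_filter, Finset.mem_univ, true_and]; simpa using hj⟩
  let e : Fin w ≃ S := (S.orderIsoOfFin rfl).toEquiv
  let t : Fin w → E := fun k => γ ^ (((e k : Fin n)) : ℕ)
  let b : Fin w → E := fun k => algebraMap F E (v (e k)) * t k ^ c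
  -- injectivity of t
  have htinj : Function.Injective t := by
    intro k1 k2 hkk
    have h1 := hγ.pow_inj (e k1).1.isLt (e k2).1.isLt hkk
    exact e.injective (Subtype.ext (Fin.ext h1))
  -- injectivity of t^q
  have hkey : ∀ a' b' : ℕ, a' < n → b' < n → b' ≤ a' → γ ^ (a' * q) = γ ^ (b' * q) →
      a' = b' := by
    intro a' b' ha' hb' hba hab
    have h1 : γ ^ (b' * q) * γ ^ ((a' - b') * q) = γ ^ (b' * q) * 1 := by
      rw [mul_one, ← pow_add, ← Nat.add_mul, Nat.add_sub_cancel' hba]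
      exact hab
    have h2 : γ ^ ((a' - b') * q) = 1 :=
      mul_left_cancel₀ (pow_ne_zero _ hγ0) h1
    have h3 : n ∣ (a' - b') * q := (hγ.pow_eq_one_iff_dvd _).mp h2
    have h4 : n ∣ (a' - b') := Nat.Coprime.dvd_of_dvd_mul_right hgcd h3
    rcases Nat.eq_zero_of_dvd_of_lt h4 (by omega) with h5
    omega
  have htqinj : Function.Injective fun k => t k ^ q := by
    intro k1 k2 hkk
    simp only [t, ← pow_mul] at hkk
    have h1 : ((e k1 : Fin n) : ℕ) = ((e k2 : Fin n) : ℕ) := by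
      rcases le_total ((e k2 : Fin n) : ℕ) ((e k1 : Fin n) : ℕ) with h | h
      · exact hkey _ _ (e k1).1.isLt (e k2).1.isLt h hkk
      · exact (hkey _ _ (e k2).1.isLt (e k1).1.isLt h hkk.symm).symm
    exact e.injective (Subtype.ext (Fin.ext h1))
  -- nonvanishing of b
  have hbne : ∀ k, b k ≠ 0 := by
    intro k
    have hvk : v (e k) ≠ 0 := by
      exact (Finset.mem_filter.mp (e k).2).2
    exact mul_ne_zero
      (fun h0 => hvk ((algebraMap F E).injective (by rw [h0, map_zero])))
      (pow_ne_zero _ (pow_ne_zero _ hγ0))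
  -- syndrome equations
  have hsyn : ∀ i1 i2 : ℕ, i1 ≤ q - 2 → i2 ≤ s →
      ∑ k, b k * t k ^ (i1 + q * i2) = 0 := by
    intro i1 i2 hi1 hi2
    obtain ⟨hzα, hzβ, hznd⟩ := hwindow i1 i2 hi1 hi2
    set z := c + i1 + q * i2 with hz
    have h0 := hv z (by omega) ⟨z, 0, hzα, hzβ, hznd, by simp [Nat.ModEq]⟩
    calc ∑ k, b k * t k ^ (i1 + q * i2)
        = ∑ k : Fin w, algebraMap F E (v (e k)) * γ ^ (((e k : Fin n) : ℕ) * z) := by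
          refine Finset.sum_congr rfl fun k _ => ?_
          show algebraMap F E (v (e k)) * (γ ^ ((e k : Fin n) : ℕ)) ^ c
              * (γ ^ ((e k : Fin n) : ℕ)) ^ (i1 + q * i2) = _
          rw [mul_assoc, ← pow_add, ← Nat.add_assoc, ← hz, ← pow_mul]
      _ = ∑ j ∈ S, algebraMap F E (v j) * γ ^ ((j : ℕ) * z) := by
          rw [← Finset.sum_attach S (fun j => algebraMap F E (v j) * γ ^ ((j : ℕ) * z))]
          exact Equiv.sum_comp e (fun x : S => algebraMap F E (v x) * γ ^ (((x : Fin n) : ℕ) * z))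
      _ = ∑ j : Fin n, algebraMap F E (v j) * γ ^ ((j : ℕ) * z) := by
          refine Finset.sum_subset (Finset.subset_univ S) (fun j _ hj => ?_)
          have : v j = 0 := by
            by_contra hne
            exact hj (by simp [hS, hne])
          rw [this, map_zero, zero_mul]
      _ = 0 := h0
  have hmain := ht_core hq2 hw1 htinj htqinj hbne hsyn
  omega
end

section
/- If β − α < 2q − 3, then every nonzero codeword v ∈ C of the cyclic code with defining set Z = {z ∈ {0,…,n−1} : z ≡ x·q^i (mod n) for some integer i ≥ 0 and some x with α ≤ x ≤ β and x ≢ 0 (mod q)} has Hamming weight at least ⌊(β − α + 3)/2⌋. -/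
/-- **Hartmann–Tzeng-type bound, case `β − α < 2q − 3`.**
Let `C` be the cyclic code of length `n` over `F = 𝔽_q` with defining set
`Z = {z mod n : z ≡ x·qⁱ (mod n), α ≤ x ≤ β, q ∤ x}`. If `β − α < 2q − 3`,
then every nonzero codeword of `C` has Hamming weight at least
`⌊(β − α + 3)/2⌋`. -/
theorem cyclic_code_weight_bound_small_range
    {F E : Type*} [Field F] [Fintype F] [DecidableEq F] [Field E] [Algebra F E]
    {q n : ℕ} (hq : Fintype.card F = q) (hn : 0 < n) (hgcd : Nat.gcd n q = 1)
    {α β : ℕ} (hα : 2 ≤ α) (hαβ : α ≤ β) (hβ : β < n)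
    (γ : E) (hγ : IsPrimitiveRoot γ n)
    (hrange : β - α < 2 * q - 3)
    (v : Fin n → F)
    (hv : ∀ z : ℕ, z < n →
      (∃ x i : ℕ, α ≤ x ∧ x ≤ β ∧ ¬ q ∣ x ∧ z ≡ x * q ^ i [MOD n]) →
      ∑ j : Fin n, algebraMap F E (v j) * γ ^ ((j : ℕ) * z) = 0)
    (hv0 : v ≠ 0) :
    (β - α + 3) / 2 ≤ hammingNorm v := by
  classical
  have hq2 : 2 ≤ q := hq ▸ Fintype.one_lt_card
  set r : ℕ := (β - α + 1) / 2 with hr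
  have hgoal : (β - α + 3) / 2 = r + 1 := by omega
  rw [hgoal]
  by_contra hcon
  push_neg at hcon
  have hw : hammingNorm v ≤ r := by omega
  have hrq : r + 2 ≤ q := by omega
  have h2r : 2 * r ≤ β - α + 1 := by omega
  -- find a run of r consecutive integers in [α, β] none divisible by q
  obtain ⟨c, hcα, hc⟩ : ∃ c, α ≤ c ∧ ∀ t, t < r → c + t ≤ β ∧ ¬ q ∣ (c + t) := by
    by_cases h : ∀ t, t < r → ¬ q ∣ (α + t)
    · exact ⟨α, le_refl _, fun t ht => ⟨by omega, h t ht⟩⟩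
    · push_neg at h
      obtain ⟨t, ht, m, hm⟩ := h
      refine ⟨α + t + 1, by omega, fun s hs => ⟨by omega, ?_⟩⟩
      rintro ⟨m', hm'⟩
      have hmm : m < m' := by
        have : q * m < q * m' := by omega
        exact lt_of_mul_lt_mul_left this (Nat.zero_le q)
      have h1 : q * (m' - m) = 1 + s := by
        rw [Nat.mul_sub]; omega
      have h2 : q ≤ q * (m' - m) := Nat.le_mul_of_pos_right q (by omega)
      omega
  -- the support of v
  set S : Finset (Fin n) := {j | v j ≠ 0} with hS
  have hwS : hammingNorm v = S.card := rfl
  have hmemS : ∀ j : Fin n, j ∈ S ↔ v j ≠ 0 := by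
    intro j; simp [hS]
  set e : Fin S.card ≃ S := S.equivFin.symm with he
  set x : Fin S.card → E := fun k => γ ^ (((e k : Fin n) : ℕ)) with hx
  have hγ0 : γ ≠ 0 := hγ.ne_zero hn.ne'
  have hxinj : Function.Injective x := by
    intro k l h
    have h2 := hγ.pow_inj (Fin.is_lt (e k : Fin n)) (Fin.is_lt (e l : Fin n)) h
    exact e.injective (Subtype.ext (Fin.ext h2))
  set a : Fin S.card → E :=
    fun k => algebraMap F E (v (e k)) * γ ^ (((e k : Fin n) : ℕ) * c) with ha
  set M : Matrix (Fin S.card) (Fin S.card) E := (Matrix.vandermonde x).transpose with hM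
  have hdet : M.det ≠ 0 := by
    rw [hM, Matrix.det_transpose]
    exact Matrix.det_vandermonde_ne_zero_iff.mpr hxinj
  have hmul : M.mulVec a = 0 := by
    funext t
    have htr : (t : ℕ) < r := lt_of_lt_of_le t.is_lt (hwS ▸ hw)
    obtain ⟨hcb, hcd⟩ := hc t htr
    have hz := hv (c + t) (lt_of_le_of_lt hcb hβ)
      ⟨c + t, 0, by omega, hcb, hcd, by simp [Nat.ModEq]⟩
    have key : ∀ j : Fin n,
        algebraMap F E (v j) * γ ^ ((j : ℕ) * (c + (t : ℕ)))
          = (γ ^ ((j : ℕ))) ^ (t : ℕ) * (algebraMap F E (v j) * γ ^ ((j : ℕ) * c)) := by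
      intro j
      rw [Nat.mul_add, pow_add, ← pow_mul]
      ring
    have hsum : ∑ k : Fin S.card, x k ^ (t : ℕ) * a k = 0 := by
      rw [← hz]
      rw [show (∑ j : Fin n, algebraMap F E (v j) * γ ^ ((j : ℕ) * (c + (t : ℕ))))
          = ∑ j ∈ S, algebraMap F E (v j) * γ ^ ((j : ℕ) * (c + (t : ℕ))) from
        (Finset.sum_subset S.subset_univ (by
          intro j _ hjS
          have : v j = 0 := by
            by_contra hne; exact hjS ((hmemS j).mpr hne)
          simp [this])).symm]
      rw [← Finset.sum_coe_sort S (fun j => algebraMap F E (v j) * γ ^ ((j : ℕ) * (c + (t : ℕ))))]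
      rw [← Equiv.sum_comp e (fun s : S =>
        algebraMap F E (v s) * γ ^ (((s : Fin n) : ℕ) * (c + (t : ℕ))))]
      exact Finset.sum_congr rfl (fun k _ => by rw [key (e k)])
    simpa [Matrix.mulVec, dotProduct, hM, Matrix.vandermonde] using hsum
  have ha0 : a = 0 := Matrix.eq_zero_of_mulVec_eq_zero hdet hmul
  -- derive v = 0
  apply hv0
  funext j
  by_contra hj
  have hjS : j ∈ S := (hmemS j).mpr hj
  set k : Fin S.card := e.symm ⟨j, hjS⟩ with hk
  have hek : (e k : Fin n) = j := by rw [hk, Equiv.apply_symm_apply]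
  have : a k = 0 := by rw [ha0]; rfl
  rw [ha] at this
  simp only [hek] at this
  rcases mul_eq_zero.mp this with h | h
  · exact hj ((map_eq_zero_iff _ (algebraMap F E).injective).mp h)
  · exact pow_ne_zero _ hγ0 h
end

section
/- Suppose 2 ≤ 2δ < δ_max. Suppose κ ≥ 1 and H̃_0, H̃_1 are κ×n matrices over F_q such that: the nonzero rows of H̃_0 and H̃_1 taken together are linearly independent; H̃_0 has no zero row; and {v ∈ F_q^n : v·H̃_0ᵗ = 0 and v·H̃_1ᵗ = 0} = C, the narrow-sense BCH code of designed distance 2δ+1. Let G(D) = H̃_0 + H̃_1·D and V = {u(D)G(D) : u(D) ∈ F_q[D]^κ}. Then every nonzero codeword v(D) = u(D)G(D) ∈ V has weight wt(v(D)) ≥ δ_max + 1. -/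
private lemma evenZ (N D a : ℤ) (hN : 1 ≤ N) (hD : 2 ≤ D) (ha : 1 ≤ a)
    (h : N * D ≤ a - 1) : N * ((D - 1) * (a + 1)) < a * a - 1 := by
  nlinarith [mul_le_mul_of_nonneg_right h (by linarith : (0:ℤ) ≤ a + 1),
    mul_le_mul_of_nonneg_right hN (by linarith : (0:ℤ) ≤ a + 1)]

private lemma oddZ (N D a q : ℤ) (hN : 1 ≤ N) (hD : 2 ≤ D) (ha : 1 ≤ a) (hq : 2 ≤ q)
    (h : N * D ≤ q * a - q + 1) : N * ((D - 1) * (a + 1)) < q * (a * a) - 1 := by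
  nlinarith [mul_le_mul_of_nonneg_right h (by linarith : (0:ℤ) ≤ a + 1),
    mul_le_mul_of_nonneg_right hN (by linarith : (0:ℤ) ≤ a + 1)]

lemma bchKeyIneq {q r N n δmax : ℕ} (hq : 2 ≤ q) (hr : 1 ≤ r)
    (hrn : q ^ r - 1 = N * n) (hN : 1 ≤ N)
    (hd : N * δmax ≤ q ^ ((r + 1) / 2) - 1 - (if r % 2 = 1 then q - 2 else 0)) :
    ∀ x y i : ℕ, 1 ≤ x → x ≤ δmax - 1 → 1 ≤ y → y ≤ δmax - 1 → 2 * i ≤ r →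
      x * q ^ i + y < n := by
  intro x y i hx1 hx2 hy1 hy2 hir
  have hδ2 : 2 ≤ δmax := by omega
  have hδ1 : 1 ≤ δmax := by omega
  set m := (r + 1) / 2 with hm
  set f := r / 2 with hf
  have hmf : m + f = r := by omega
  have hiq : q ^ i ≤ q ^ f := Nat.pow_le_pow_right (by omega) (by omega)
  have ha1 : 1 ≤ q ^ f := Nat.one_le_pow _ _ (by omega)
  have hqr : q ^ r = q ^ m * q ^ f := by rw [← pow_add, hmf]
  have hqm : q ≤ q ^ m := Nat.le_self_pow (by omega) q
  have hkey : N * ((δmax - 1) * (q ^ f + 1)) < N * n := by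
    rw [← hrn]
    rcases Nat.even_or_odd r with he | ho
    · have hr0 : r % 2 = 0 := Nat.even_iff.mp he
      have hmf2 : m = f := by omega
      rw [hr0] at hd
      have hd' : N * δmax ≤ q ^ f - 1 := by rw [hmf2] at hd; simpa using hd
      have hqq1 : 1 ≤ q ^ f * q ^ f := Nat.one_le_iff_ne_zero.mpr (by positivity)
      rw [hqr, hmf2]
      zify [ha1, hδ1, hqq1] at hd' ⊢
      exact evenZ _ _ _ (by exact_mod_cast hN) (by exact_mod_cast hδ2)
        (by exact_mod_cast ha1) hd'
    · have hr0 : r % 2 = 1 := Nat.odd_iff.mp ho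
      have hmf2 : m = f + 1 := by omega
      rw [hr0] at hd
      simp only [if_pos rfl] at hd
      have hqm' : q ^ m = q * q ^ f := by rw [hmf2, pow_succ, mul_comm]
      have hd'' : N * δmax ≤ q ^ m - 1 - (q - 2) := by simpa using hd
      rw [hqm'] at hd''
      have hq4 : q ≤ q * q ^ f := Nat.le_mul_of_pos_right _ (by positivity)
      have hd' : N * δmax ≤ q * q ^ f - q + 1 := by omega
      have hqr1 : 1 ≤ q * (q ^ f * q ^ f) := Nat.one_le_iff_ne_zero.mpr (by positivity)
      rw [hqr, hqm', mul_assoc]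
      zify [hδ1, hqr1, hq4] at hd' ⊢
      exact oddZ _ _ _ _ (by exact_mod_cast hN) (by exact_mod_cast hδ2)
        (by exact_mod_cast ha1) (by exact_mod_cast hq) hd'
  have hkey2 : (δmax - 1) * (q ^ f + 1) < n := Nat.lt_of_mul_lt_mul_left hkey
  calc x * q ^ i + y ≤ (δmax - 1) * q ^ f + (δmax - 1) := by
        have := Nat.mul_le_mul hx2 hiq
        omega
    _ = (δmax - 1) * (q ^ f + 1) := by ring
    _ < n := hkey2

lemma bchNoDvd {q r N n δmax : ℕ} (hq : 2 ≤ q) (hr : 1 ≤ r)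
    (hrn : q ^ r - 1 = N * n) (hN : 1 ≤ N)
    (hd : N * δmax ≤ q ^ ((r + 1) / 2) - 1 - (if r % 2 = 1 then q - 2 else 0)) :
    ∀ x y i : ℕ, 1 ≤ x → x ≤ δmax - 1 → 1 ≤ y → y ≤ δmax - 1 → i < r →
      ¬ (n ∣ x * q ^ i + y) := by
  intro x y i hx1 hx2 hy1 hy2 hir hdvd
  rcases le_or_gt (2 * i) r with hle | hlt
  · have := bchKeyIneq hq hr hrn hN hd x y i hx1 hx2 hy1 hy2 hle
    have hle2 : n ≤ x * q ^ i + y := Nat.le_of_dvd (by positivity) hdvd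
    omega
  · set j := r - i with hj
    have hij : i + j = r := by omega
    have h2j : 2 * j ≤ r := by omega
    have hdvd2 : n ∣ y * q ^ j + x := by
      have h1 : n ∣ (x * q ^ i + y) * q ^ j := hdvd.mul_right _
      have h2 : (x * q ^ i + y) * q ^ j = x * q ^ r + y * q ^ j := by
        rw [add_mul, mul_assoc, ← pow_add, hij]
      have h3 : x * q ^ r + y * q ^ j = (y * q ^ j + x) + x * (q ^ r - 1) := by
        have h1q : 1 ≤ q ^ r := Nat.one_le_pow _ _ (by omega)
        have hxx : x ≤ x * q ^ r := Nat.le_mul_of_pos_right _ (by omega)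
        have : x * q ^ r = x + x * (q ^ r - 1) := by
          rw [Nat.mul_sub, Nat.mul_one]
          omega
        omega
      have h4 : n ∣ x * (q ^ r - 1) := by
        rw [hrn]
        exact ⟨x * N, by ring⟩
      have h5 : n ∣ (y * q ^ j + x) + x * (q ^ r - 1) := by rw [← h3, ← h2]; exact h1
      exact (Nat.dvd_add_right h4).mp (by rwa [add_comm] at h5)
    have := bchKeyIneq hq hr hrn hN hd y x j hy1 hy2 hx1 hx2 h2j
    have hle2 : n ≤ y * q ^ j + x := Nat.le_of_dvd (by positivity) hdvd2
    omega

lemma geomSumZero {E : Type*} [Field E] {n : ℕ} {γ : E} (hγ : IsPrimitiveRoot γ n)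
    {m : ℕ} (h : ¬ (n ∣ m)) : ∑ j : Fin n, γ ^ ((j : ℕ) * m) = 0 := by
  have hζ1 : γ ^ m ≠ 1 := fun h1 => h ((hγ.pow_eq_one_iff_dvd m).mp h1)
  have : ∑ j : Fin n, γ ^ ((j : ℕ) * m) = ∑ j ∈ Finset.range n, (γ ^ m) ^ j := by
    rw [← Fin.sum_univ_eq_sum_range (fun j => (γ ^ m) ^ j) n]
    exact Finset.sum_congr rfl fun j _ => by rw [← pow_mul, mul_comm]
  rw [this, geom_sum_eq hζ1, ← pow_mul, mul_comm m n, pow_mul, hγ.pow_eq_one,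
    one_pow, sub_self, zero_div]


lemma fixedOfPowCard {F E : Type*} [Field F] [Fintype F] [Field E] [Fintype E] [Algebra F E]
    (x : E) (hx : x ^ (Fintype.card F) = x) : ∃ a : F, algebraMap F E a = x := by
  classical
  by_contra hne
  push_neg at hne
  set q := Fintype.card F with hqdef
  have hq : 2 ≤ q := Fintype.one_lt_card
  set P : Polynomial E := Polynomial.X ^ q - Polynomial.X with hP
  set s : Finset E := insert x ((Finset.univ : Finset F).image (algebraMap F E)) with hs
  have hev : ∀ y ∈ s, P.eval y = 0 := by
    intro y hy
    rcases Finset.mem_insert.mp hy with rfl | hy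
    · simp [P, hx]
    · obtain ⟨a, _, rfl⟩ := Finset.mem_image.mp hy
      have : (algebraMap F E a) ^ q = algebraMap F E a := by
        rw [← map_pow, FiniteField.pow_card]
      simp [P, this]
  have hnotmem : x ∉ (Finset.univ : Finset F).image (algebraMap F E) := by
    intro hmem
    obtain ⟨a, _, ha⟩ := Finset.mem_image.mp hmem
    exact hne a ha
  have hcard : P.natDegree < s.card := by
    rw [hs, Finset.card_insert_of_notMem hnotmem,
      Finset.card_image_of_injective _ (algebraMap F E).injective, Finset.card_univ]
    have : P.natDegree ≤ q := by
      refine le_trans (Polynomial.natDegree_sub_le _ _) ?_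
      rw [Polynomial.natDegree_X_pow, Polynomial.natDegree_X]
      omega
    omega
  have hz := Polynomial.eq_zero_of_natDegree_lt_card_of_eval_eq_zero' P s hev hcard
  have hc : P.coeff 1 = 0 := by rw [hz]; simp
  rw [hP] at hc
  rw [Polynomial.coeff_sub, Polynomial.coeff_X_pow, Polynomial.coeff_X_one,
    if_neg (by omega : ¬ (1 = q))] at hc
  norm_num at hc

lemma powSumPolyNeZero {E : Type*} [Field E] [Fintype E] {q r : ℕ} (hq : 2 ≤ q) (hr : 1 ≤ r)
    (hE : Fintype.card E = q ^ r)
    (hall : ∀ s : E, ∑ i ∈ Finset.range r, s ^ q ^ i = 0) : False := by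
  classical
  set P : Polynomial E := ∑ i ∈ Finset.range r, Polynomial.X ^ q ^ i with hP
  have heval : ∀ s : E, P.eval s = 0 := by
    intro s
    simpa [P, Polynomial.eval_finset_sum] using hall s
  have hdeg : P.natDegree ≤ q ^ (r - 1) := by
    refine Polynomial.natDegree_sum_le_of_forall_le _ _ fun i hi => ?_
    rw [Polynomial.natDegree_X_pow]
    exact Nat.pow_le_pow_right (by omega) (by have := Finset.mem_range.mp hi; omega)
  have hz : P = 0 := by
    refine Polynomial.eq_zero_of_natDegree_lt_card_of_eval_eq_zero P Function.injective_id
      (fun s => heval s) ?_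
    rw [Fintype.card_congr (Equiv.refl E), hE]
    have : q ^ (r - 1) < q ^ r := Nat.pow_lt_pow_right (by omega) (by omega)
    omega
  have hc : P.coeff (q ^ (r - 1)) = 1 := by
    rw [hP, Polynomial.finset_sum_coeff]
    rw [Finset.sum_eq_single (r - 1)]
    · simp [Polynomial.coeff_X_pow]
    · intro i hi hne
      rw [Polynomial.coeff_X_pow]
      have : ¬ (q ^ (r - 1) = q ^ i) := fun h =>
        hne (Nat.pow_right_injective hq h.symm)
      simp [this]
    · intro h
      exact absurd (Finset.mem_range.mpr (by omega)) h
  rw [hz] at hc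
  simp at hc



/-- **Dual free distance of the unit-memory convolutional BCH code.**
With `G(D) = H̃₀ + H̃₁ D` obtained from a parity check matrix of the
narrow-sense BCH code of designed distance `2δ+1`, every nonzero codeword
`v(D) = u(D)G(D)` of `V` has weight at least `δ_max + 1`. -/
theorem convolutional_BCH_dual_free_distance
    {F E : Type*} [Field F] [Fintype F] [DecidableEq F]
    [Field E] [Fintype E] [Algebra F E]
    {q n r δ κ : ℕ} (hq : Fintype.card F = q)
    (hn : 0 < n) (hgcd : Nat.gcd n q = 1)
    (hr : 0 < r) (hr1 : q ^ r ≡ 1 [MOD n])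
    (hrmin : ∀ s : ℕ, 0 < s → q ^ s ≡ 1 [MOD n] → r ≤ s)
    (hE : Fintype.card E = q ^ r)
    (γ : E) (hγ : IsPrimitiveRoot γ n)
    (δmax : ℕ)
    (hδmax : δmax = n * (q ^ ((r + 1) / 2) - 1 - (if r % 2 = 1 then q - 2 else 0)) / (q ^ r - 1))
    (hδ : 2 ≤ 2 * δ) (hδ2 : 2 * δ < δmax)
    (hκ : 1 ≤ κ)
    (H0 H1 : Matrix (Fin κ) (Fin n) F)
    (hind : LinearIndependent F
      (fun p : {p : Fin 2 × Fin κ // (![H0, H1] p.1) p.2 ≠ 0} => (![H0, H1] p.1.1) p.1.2))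
    (h0 : ∀ j : Fin κ, H0 j ≠ 0)
    (hC : ∀ v : Fin n → F, (H0.mulVec v = 0 ∧ H1.mulVec v = 0) ↔
      (∀ z : ℕ, 1 ≤ z → z ≤ 2 * δ → ∑ j : Fin n, algebraMap F E (v j) * γ ^ ((j : ℕ) * z) = 0))
    (G : Matrix (Fin κ) (Fin n) (Polynomial F))
    (hG : G = H0.map Polynomial.C + H1.map (fun a => Polynomial.C a * Polynomial.X))
    (u : Fin κ → Polynomial F) (hu : Matrix.vecMul u G ≠ 0) :
    δmax + 1 ≤ polyVecWeight (Matrix.vecMul u G) := by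
  classical
  have hq2 : 2 ≤ q := hq ▸ Fintype.one_lt_card
  have hq1r : 1 ≤ q ^ r := Nat.one_le_pow _ _ (by omega)
  have hdvdn : n ∣ q ^ r - 1 := (Nat.modEq_iff_dvd' hq1r).mp hr1.symm
  set N := (q ^ r - 1) / n with hNdef
  have hrn : q ^ r - 1 = N * n := (Nat.div_mul_cancel hdvdn).symm
  have hqrgt : 1 < q ^ r := by
    calc 1 < 2 := one_lt_two
    _ ≤ q := hq2
    _ = q ^ 1 := (pow_one q).symm
    _ ≤ q ^ r := Nat.pow_le_pow_right (by omega) (by omega)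
  have hN1 : 1 ≤ N := by
    rcases Nat.eq_zero_or_pos N with h | h
    · rw [h, zero_mul] at hrn; omega
    · exact h
  set A := q ^ ((r + 1) / 2) - 1 - (if r % 2 = 1 then q - 2 else 0) with hA
  have hδmaxA : δmax = A / N := by
    rw [hδmax, hrn, mul_comm N n, Nat.mul_div_mul_left _ _ hn]
  have hd : N * δmax ≤ A := by
    rw [hδmaxA, mul_comm]
    exact Nat.div_mul_le_self A N
  have hδm3 : 3 ≤ δmax := by omega
  -- characteristic setup
  set p := ringChar F with hp
  haveI hpprime : Fact p.Prime := ⟨CharP.char_is_prime F p⟩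
  obtain ⟨k, hpk, hk⟩ := FiniteField.card F p
  haveI : CharP E p := charP_of_injective_algebraMap (algebraMap F E).injective p
  have hqp : q = p ^ (k : ℕ) := by rw [← hq, hk]
  have frobE : ∀ (i : ℕ) {ι : Type} (s : Finset ι) (g : ι → E),
      (∑ j ∈ s, g j) ^ q ^ i = ∑ j ∈ s, (g j) ^ q ^ i := by
    intro i ι s g
    have h1 : q ^ i = p ^ ((k : ℕ) * i) := by rw [hqp, ← pow_mul]
    rw [h1]
    have h2 := map_sum (iterateFrobenius E p ((k : ℕ) * i)) g s
    simp only [iterateFrobenius_def] at h2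
    exact h2
  have frobFix : ∀ (a : F) (i : ℕ), (algebraMap F E a) ^ q ^ i = algebraMap F E a := by
    intro a i
    rw [← map_pow, ← hq, FiniteField.pow_card_pow]
  have powCardE : ∀ x : E, x ^ q ^ r = x := by
    intro x; rw [← hE, FiniteField.pow_card]
  have hnodvd : ∀ y z iexp : ℕ, y ≤ δmax - 1 → 1 ≤ z → z ≤ δmax - 1 → iexp < r →
      ¬ (n ∣ y * q ^ iexp + z) := by
    intro y z iexp hy hz1 hz2 hi hdvd
    rcases Nat.eq_zero_or_pos y with rfl | hy1
    · have hlt : z * q ^ 0 + 1 < n :=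
        bchKeyIneq hq2 hr hrn hN1 hd z 1 0 hz1 hz2 (by omega) (by omega) (by omega)
      rw [pow_zero, mul_one] at hlt
      rw [zero_mul, zero_add] at hdvd
      have := Nat.le_of_dvd (by omega) hdvd
      omega
    · exact bchNoDvd hq2 hr hrn hN1 hd y z iexp hy1 hy hz1 hz2 hi hdvd
  -- the codeword and a nonzero coefficient slice
  set v := Matrix.vecMul u G with hv
  have hex : ∃ t : ℕ, (fun j => (v j).coeff t) ≠ 0 := by
    by_contra hcon
    push_neg at hcon
    apply hu
    funext j
    ext t
    simpa using congrFun (hcon t) j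
  obtain ⟨t, hwne⟩ := hex
  set w : Fin n → F := fun j => (v j).coeff t with hwdef
  have hwne' : w ≠ 0 := hwne
  -- decomposition of w
  have hGij : ∀ i j, G i j = Polynomial.C (H0 i j) + Polynomial.C (H1 i j) * Polynomial.X := by
    intro i j; rw [hG]; simp [Matrix.map_apply]
  have hdecomp : ∃ a b : Fin κ → F,
      ∀ j, w j = (∑ i, a i * H0 i j) + (∑ i, b i * H1 i j) := by
    refine ⟨fun i => (u i).coeff t, fun i => if t = 0 then 0 else (u i).coeff (t - 1),
      fun j => ?_⟩
    have hvj : v j = ∑ i, u i * G i j := by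
      rw [hv]
      simp [Matrix.vecMul, dotProduct]
    have hwj : w j = (∑ i, u i * G i j).coeff t := by
      rw [hwdef]
      simp only
      rw [hvj]
    rw [hwj, Polynomial.finset_sum_coeff, ← Finset.sum_add_distrib]
    refine Finset.sum_congr rfl fun i _ => ?_
    rw [hGij, mul_add, Polynomial.coeff_add]
    congr 1
    · exact Polynomial.coeff_mul_C _ _ _
    · rw [← mul_assoc]
      rcases t with _ | t'
      · simp [Polynomial.coeff_mul_X_zero]
      · simp [Polynomial.coeff_mul_X, Polynomial.coeff_mul_C]
  -- orthogonality
  have horth : ∀ c : Fin n → F, H0.mulVec c = 0 → H1.mulVec c = 0 →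
      ∑ j : Fin n, w j * c j = 0 := by
    intro c h0c h1c
    obtain ⟨a, b, hab⟩ := hdecomp
    have e0 : ∑ j, (∑ i, a i * H0 i j) * c j = ∑ i, a i * (H0.mulVec c) i := by
      simp only [Matrix.mulVec, dotProduct, Finset.sum_mul, Finset.mul_sum, mul_assoc]
      exact Finset.sum_comm
    have e1 : ∑ j, (∑ i, b i * H1 i j) * c j = ∑ i, b i * (H1.mulVec c) i := by
      simp only [Matrix.mulVec, dotProduct, Finset.sum_mul, Finset.mul_sum, mul_assoc]
      exact Finset.sum_comm
    calc ∑ j : Fin n, w j * c j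
        = ∑ j, ((∑ i, a i * H0 i j) * c j + (∑ i, b i * H1 i j) * c j) :=
          Finset.sum_congr rfl fun j _ => by rw [hab j, add_mul]
      _ = (∑ i, a i * (H0.mulVec c) i) + ∑ i, b i * (H1.mulVec c) i := by
          rw [Finset.sum_add_distrib, e0, e1]
      _ = 0 := by
          rw [h0c, h1c]
          simp
  -- spectral vanishing
  have frobE1 : ∀ {ι : Type} (s : Finset ι) (g : ι → E),
      (∑ j ∈ s, g j) ^ q = ∑ j ∈ s, (g j) ^ q := by
    intro ι s g
    have h6 := frobE 1 s g
    rwa [pow_one] at h6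
  have hspec : ∀ y : ℕ, y ≤ δmax - 1 →
      ∑ j : Fin n, algebraMap F E (w j) * γ ^ ((j : ℕ) * y) = 0 := by
    intro y hy
    set xy := ∑ j : Fin n, algebraMap F E (w j) * γ ^ ((j : ℕ) * y) with hxy
    by_contra hxyne
    have hcbeta : ∀ β : E, ∑ i ∈ Finset.range r, (β * xy) ^ q ^ i = 0 := by
      intro β
      set cE : Fin n → E :=
        fun j => ∑ i ∈ Finset.range r, (β * γ ^ ((j : ℕ) * y)) ^ q ^ i with hcE
      have hfix : ∀ j, (cE j) ^ Fintype.card F = cE j := by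
        intro j
        set g : ℕ → E := fun i => (β * γ ^ ((j : ℕ) * y)) ^ q ^ i with hg
        have hstep : (cE j) ^ Fintype.card F = ∑ i ∈ Finset.range r, g (i + 1) := by
          rw [hq]
          simp only [hcE]
          rw [frobE1]
          refine Finset.sum_congr rfl fun i _ => ?_
          simp only [hg]
          rw [← pow_mul, ← pow_succ]
        rw [hstep]
        have h1 := Finset.sum_range_succ' g r
        have h2 := Finset.sum_range_succ g r
        have hgr : g r = g 0 := by
          simp only [hg]
          rw [powCardE, pow_zero, pow_one]
        have h3 : (∑ i ∈ Finset.range r, g (i + 1)) + g 0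
            = (∑ i ∈ Finset.range r, g i) + g 0 := by
          rw [← h1, h2, hgr]
        exact add_right_cancel h3
      choose cf hcf using fun j => fixedOfPowCard (cE j) (hfix j)
      have hcode : ∀ z : ℕ, 1 ≤ z → z ≤ 2 * δ →
          ∑ j : Fin n, algebraMap F E (cf j) * γ ^ ((j : ℕ) * z) = 0 := by
        intro z hz1 hz2
        have hterm : ∀ j : Fin n, algebraMap F E (cf j) * γ ^ ((j : ℕ) * z)
            = ∑ i ∈ Finset.range r, β ^ q ^ i * γ ^ ((j : ℕ) * (y * q ^ i + z)) := by
          intro j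
          rw [hcf j]
          simp only [hcE]
          rw [Finset.sum_mul]
          refine Finset.sum_congr rfl fun i _ => ?_
          rw [mul_pow, ← pow_mul, mul_assoc, ← pow_add]
          congr 2
          ring
        rw [Finset.sum_congr rfl (fun j _ => hterm j), Finset.sum_comm]
        refine Finset.sum_eq_zero fun i hi => ?_
        rw [← Finset.mul_sum]
        have hnd : ¬ (n ∣ y * q ^ i + z) :=
          hnodvd y z i hy hz1 (by omega) (Finset.mem_range.mp hi)
        rw [geomSumZero hγ hnd, mul_zero]
      obtain ⟨hc0, hc1⟩ := (hC cf).mpr hcode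
      have hdot := horth cf hc0 hc1
      have hdotE : ∑ j : Fin n, algebraMap F E (w j) * cE j = 0 := by
        have h4 := congrArg (algebraMap F E) hdot
        rw [map_sum, map_zero] at h4
        rw [← h4]
        exact Finset.sum_congr rfl fun j _ => by rw [map_mul, hcf j]
      have key : ∑ j : Fin n, algebraMap F E (w j) * cE j
          = ∑ i ∈ Finset.range r, (β * xy) ^ q ^ i := by
        have hswap : ∑ j : Fin n, algebraMap F E (w j) * cE j
            = ∑ i ∈ Finset.range r, ∑ j : Fin n,
                algebraMap F E (w j) * (β * γ ^ ((j : ℕ) * y)) ^ q ^ i := by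
          simp only [hcE, Finset.mul_sum]
          exact Finset.sum_comm
        rw [hswap]
        refine Finset.sum_congr rfl fun i _ => ?_
        have hterm2 : ∀ j : Fin n, algebraMap F E (w j) * (β * γ ^ ((j : ℕ) * y)) ^ q ^ i
            = (algebraMap F E (w j) * γ ^ ((j : ℕ) * y)) ^ q ^ i * β ^ q ^ i := by
          intro j
          rw [mul_pow, mul_pow, frobFix]
          ring
        rw [Finset.sum_congr rfl (fun j _ => hterm2 j), ← Finset.sum_mul, ← frobE i,
          hxy, mul_pow]
        ring
      rw [key] at hdotE
      exact hdotE
    refine powSumPolyNeZero hq2 hr hE fun s => ?_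
    have h5 := hcbeta (s / xy)
    rwa [div_mul_cancel₀ _ hxyne] at h5
  -- Hamming weight bound via Vandermonde
  have hham : δmax + 1 ≤ hammingNorm w := by
    by_contra hcon
    push_neg at hcon
    have hcon' : hammingNorm w ≤ δmax := by omega
    set s : Finset (Fin n) := Finset.univ.filter (fun j => w j ≠ 0) with hs
    have hscard : s.card = hammingNorm w := rfl
    set d := s.card with hdd
    set e : {x // x ∈ s} ≃ Fin d := s.equivFin with he
    have hinj : Function.Injective fun k : Fin d => γ ^ ((e.symm k : Fin n) : ℕ) := by
      intro k1 k2 hk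
      have h1 := hγ.pow_inj (Fin.is_lt (e.symm k1 : Fin n)) (Fin.is_lt (e.symm k2 : Fin n)) hk
      have h2 : (e.symm k1 : Fin n) = (e.symm k2 : Fin n) := Fin.ext h1
      have h3 : e.symm k1 = e.symm k2 := Subtype.ext h2
      simpa using congrArg e h3
    have hzero : ∀ i : Fin d, ∑ k : Fin d,
        algebraMap F E (w ((e.symm k : Fin n))) * (γ ^ ((e.symm k : Fin n) : ℕ)) ^ (i : ℕ)
          = 0 := by
      intro i
      have hstep1 : ∀ k : Fin d,
          algebraMap F E (w ((e.symm k : Fin n))) * (γ ^ ((e.symm k : Fin n) : ℕ)) ^ (i : ℕ)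
          = (fun x : {x // x ∈ s} =>
              algebraMap F E (w (x : Fin n)) * γ ^ (((x : Fin n) : ℕ) * (i : ℕ))) (e.symm k) := by
        intro k
        simp only
        rw [← pow_mul]
      rw [Finset.sum_congr rfl (fun k _ => hstep1 k)]
      rw [Equiv.sum_comp e.symm
        (fun x : {x // x ∈ s} => algebraMap F E (w (x : Fin n)) * γ ^ (((x : Fin n) : ℕ) * (i : ℕ)))]
      rw [Finset.sum_coe_sort s (fun j => algebraMap F E (w j) * γ ^ ((j : ℕ) * (i : ℕ)))]
      have hext : ∑ j ∈ s, algebraMap F E (w j) * γ ^ ((j : ℕ) * (i : ℕ))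
          = ∑ j : Fin n, algebraMap F E (w j) * γ ^ ((j : ℕ) * (i : ℕ)) := by
        refine Finset.sum_subset (Finset.subset_univ s) fun j _ hj => ?_
        have hwj : w j = 0 := by
          by_contra hne
          exact hj (Finset.mem_filter.mpr ⟨Finset.mem_univ j, hne⟩)
        rw [hwj, map_zero, zero_mul]
      rw [hext]
      refine hspec (i : ℕ) ?_
      have := Fin.is_lt i
      omega
    have hvv := Matrix.eq_zero_of_forall_pow_sum_mul_pow_eq_zero hinj hzero
    obtain ⟨j0, hj0⟩ : ∃ j0, w j0 ≠ 0 := Function.ne_iff.mp hwne'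
    have hj0s : j0 ∈ s := Finset.mem_filter.mpr ⟨Finset.mem_univ j0, hj0⟩
    have h4 := congrFun hvv (e ⟨j0, hj0s⟩)
    simp only [Equiv.symm_apply_apply, Pi.zero_apply] at h4
    exact hj0 ((map_eq_zero (algebraMap F E)).mp h4)
  -- conclude
  have hfin : (Function.support fun t : ℕ => hammingNorm (fun j => (v j).coeff t)).Finite := by
    apply Set.Finite.subset (Finset.univ.biUnion (fun j : Fin n => (v j).support)).finite_toSet
    intro s hs
    simp only [Function.mem_support] at hs
    obtain ⟨j, hj⟩ : ∃ j, (v j).coeff s ≠ 0 := by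
      by_contra hcon
      push_neg at hcon
      exact hs (hammingNorm_eq_zero.mpr (funext fun j => hcon j))
    simp only [Finset.coe_biUnion, Finset.coe_univ, Set.mem_iUnion, Finset.mem_coe,
      Set.mem_univ, true_and]
    exact ⟨j, trivial, Polynomial.mem_support_iff.mpr hj⟩
  calc δmax + 1 ≤ hammingNorm w := hham
    _ ≤ polyVecWeight v := single_le_finsum t hfin (fun _ => Nat.zero_le _)
end

section
/- Suppose 2 ≤ 2δ < ⌊n(q^r − 1)/(q^{2r} − 1)⌋. Suppose κ ≥ 1 and H̃_0, H̃_1 are κ×n matrices over F_{q²} such that: the nonzero rows of H̃_0 and H̃_1 taken together are linearly independent; H̃_0 has no zero row; and {v ∈ F_{q²}^n : v·H̃_0ᵗ = 0 and v·H̃_1ᵗ = 0} = C, the narrow-sense BCH code over F_{q²} of designed distance 2δ+1. Let G(D) = H̃_0 + H̃_1·D and V = {u(D)G(D) : u(D) ∈ F_{q²}[D]^κ}. Then V is self-orthogonal with respect to the Hermitian inner product: for all u(D), w(D) ∈ F_{q²}[D]^κ, the codewords v(D) = u(D)G(D) and x(D) = w(D)G(D) satisfy Σ_t Σ_{j=1}^n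 v_{t,j} · (x_{t,j})^q = 0, where v_t, x_t ∈ F_{q²}^n are the coefficient vectors of D^t. -/
/-!
Every coefficient vector of a codeword of `V` lies in the row space of `H₀` and `H₁`, which is
contained in the Euclidean dual `C^⊥` of the BCH code `C`; so it suffices that `b ^ q ∈ C` for
every `b ∈ C^⊥`. By Delsarte's theorem `C^⊥` is spanned by the trace vectors
`(Tr(β γ^{jz}))_j`, `1 ≤ z ≤ 2δ`, and the syndromes of their `q`-th powers are combinations of
sums `∑_j γ^{j (z q^{2i+1} + z')}`. These vanish since `n ∤ z q^{2i+1} + z'`: the bound on `δ`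
says `(2δ + 1)(q^r + 1) ≤ n`, and `q^{2r} ≡ 1 [MOD n]` brings an exponent `2i + 1 > r`
down to `2r - 2i - 1 < r`.
-/

open Finset Polynomial

theorem Nat.mul_sub_one_div_sq_sub_one {x : ℕ} (hx : 1 < x) (n : ℕ) :
    n * (x - 1) / (x ^ 2 - 1) = n / (x + 1) := by
  rw [← one_pow 2, Nat.sq_sub_sq, one_pow, Nat.mul_div_mul_right _ _ (by omega)]

theorem Nat.not_dvd_mul_pow_add {n q r μ a b e : ℕ} (hq : 0 < q) (hn : μ * (q ^ r + 1) ≤ n)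
    (hqr : q ^ (2 * r) ≡ 1 [MOD n]) (he : e ≤ 2 * r) (ha : 0 < a) (haμ : a < μ) (hb : 0 < b)
    (hbμ : b < μ) : ¬ n ∣ a * q ^ e + b := by
  have small : ∀ {a b e}, e ≤ r → 0 < a → a < μ → 0 < b → b < μ → ¬ n ∣ a * q ^ e + b := by
    intro a b e he ha haμ hb hbμ hdvd
    have : a * q ^ e ≤ μ * q ^ r := Nat.mul_le_mul haμ.le (Nat.pow_le_pow_right hq he)
    exact absurd (Nat.le_of_dvd (by positivity) hdvd) (by linarith)
  rcases le_or_gt e r with her | her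
  · exact small her ha haμ hb hbμ
  · intro hdvd
    have hpow : q ^ (2 * r) = q ^ (2 * r - e) * q ^ e := by rw [← pow_add, Nat.sub_add_cancel he]
    refine small (e := 2 * r - e) (by omega) hb hbμ ha haμ (Nat.modEq_zero_iff_dvd.1 ?_)
    calc b * q ^ (2 * r - e) + a ≡ b * q ^ (2 * r - e) + a * q ^ (2 * r) [MOD n] := by
          simpa using (hqr.mul_left a).symm.add_left (b * q ^ (2 * r - e))
      _ = q ^ (2 * r - e) * (a * q ^ e + b) := by rw [hpow]; ring
      _ ≡ 0 [MOD n] := by simpa using (Nat.modEq_zero_iff_dvd.2 hdvd).mul_left (q ^ (2 * r - e))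

theorem IsPrimitiveRoot.sum_pow_mul_eq_zero {K : Type*} [Field K] {ζ : K} {n m : ℕ}
    (hζ : IsPrimitiveRoot ζ n) (hm : ¬ n ∣ m) : ∑ j ∈ range n, ζ ^ (j * m) = 0 := by
  have hne : ζ ^ m ≠ 1 := mt (hζ.pow_eq_one_iff_dvd m).1 hm
  simp_rw [mul_comm _ m, pow_mul]
  rw [geom_sum_eq hne, ← pow_mul, mul_comm, pow_mul, hζ.pow_eq_one, one_pow, sub_self, zero_div]

theorem exists_ringHom_eq_pow_of_card_eq_sq (F E : Type*) [Field F] [Fintype F] [Field E]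
    [Algebra F E] {q : ℕ} (hF : Fintype.card F = q ^ 2) : ∃ σ : E →+* E, ∀ x, σ x = x ^ q := by
  obtain ⟨m, hp, hm⟩ := FiniteField.card F (ringChar F)
  obtain ⟨i, -, rfl⟩ := (Nat.dvd_prime_pow hp).1 (hm ▸ hF ▸ dvd_pow_self q two_ne_zero)
  have := charP_of_injective_algebraMap (algebraMap F E).injective (ringChar F)
  have : ExpChar E (ringChar F) := ExpChar.prime hp
  exact ⟨iterateFrobenius E (ringChar F) i, fun x => iterateFrobenius_def _ _ x⟩

theorem finrank_eq_of_card_eq_pow {F E : Type*} [Field F] [Fintype F] [AddCommGroup E]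
    [Module F E] [Fintype E] {r : ℕ} (h : Fintype.card E = Fintype.card F ^ r) :
    Module.finrank F E = r :=
  Nat.pow_right_injective Fintype.one_lt_card (Module.card_eq_pow_finrank.symm.trans h)

theorem Module.Dual.mem_span_traceForm_comp {F E V ι : Type*} [Field F] [Field E] [Algebra F E]
    [FiniteDimensional F E] [Algebra.IsSeparable F E] [AddCommGroup V] [Module F V]
    [FiniteDimensional F V] (S : ι → V →ₗ[F] E) {φ : Module.Dual F V}
    (hφ : ∀ v, (∀ i, S i v = 0) → φ v = 0) :
    φ ∈ Submodule.span F (Set.range fun p : E × ι => Algebra.traceForm F E p.1 ∘ₗ S p.2) := by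
  rw [← Subspace.dualCoannihilator_dualAnnihilator_eq (W := Submodule.span F _),
    Submodule.mem_dualAnnihilator]
  refine fun v hv => hφ v fun i => (traceForm_nondegenerate F E).2 _ fun β => ?_
  rw [Submodule.mem_dualCoannihilator] at hv
  exact hv _ (Submodule.subset_span ⟨(β, i), rfl⟩)

theorem sum_mul_map_eq_zero_of_mem_span {R ι : Type*} [CommRing R] [Fintype ι] (σ : R →+* R)
    {s : Set (ι → R)} (hs : ∀ x ∈ s, ∀ y ∈ s, ∑ j, x j * σ (y j) = 0) {x y : ι → R}
    (hx : x ∈ Submodule.span R s) (hy : y ∈ Submodule.span R s) : ∑ j, x j * σ (y j) = 0 := by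
  let B : (ι → R) →ₗ[R] (ι → R) →ₛₗ[σ] R :=
    LinearMap.mk₂'ₛₗ (RingHom.id R) σ (fun x y => ∑ j, x j * σ (y j))
      (by simp [add_mul, sum_add_distrib]) (by simp [mul_sum, mul_assoc])
      (by simp [mul_add, sum_add_distrib]) (by simp [mul_sum, mul_left_comm])
  have hsy : ∀ y ∈ s, B x y = 0 := fun y hy =>
    LinearMap.eqOn_span (f := B.flip y) (g := 0) (fun x hx => hs x hx y hy) hx
  exact LinearMap.eqOn_span (f := B x) (g := 0) hsy hy

theorem coeff_vecMul_mem_span_rows {R m ι : Type*} [CommSemiring R] [Fintype m]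
    (H₀ H₁ : Matrix m ι R) (u : m → R[X]) (t : ℕ) :
    (fun j => (Matrix.vecMul u (H₀.map C + H₁.map fun a => C a * X) j).coeff t) ∈
      Submodule.span R (Set.range H₀ ∪ Set.range H₁) := by
  have hcoeff : (fun j => (Matrix.vecMul u (H₀.map C + H₁.map fun a => C a * X) j).coeff t) =
      ∑ i, ((u i).coeff t • H₀ i + (u i * X).coeff t • H₁ i) := by
    ext j
    simp [Matrix.vecMul, dotProduct, mul_add, ← mul_assoc, mul_right_comm _ (C _) X, coeff_mul_C]
  rw [hcoeff]
  exact Submodule.sum_mem _ fun i _ => add_mem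
    (Submodule.smul_mem _ _ (Submodule.subset_span (Or.inl ⟨i, rfl⟩)))
    (Submodule.smul_mem _ _ (Submodule.subset_span (Or.inr ⟨i, rfl⟩)))

section BCH

variable (F : Type*) {E : Type*} [Field F] [Field E] [Algebra F E]

def syndrome (γ : E) (n z : ℕ) : (Fin n → F) →ₗ[F] E :=
  Fintype.linearCombination F fun j : Fin n => γ ^ ((j : ℕ) * z)

/-- The narrow-sense BCH code of length `n` and designed distance `μ`. -/
def bchCode (γ : E) (n μ : ℕ) : Submodule F (Fin n → F) :=
  ⨅ z : Set.Ico 1 μ, LinearMap.ker (syndrome F γ n z)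

def traceCode (γ : E) (n μ : ℕ) : Submodule F (Fin n → F) :=
  Submodule.span F <| Set.range fun p : E × Set.Ico 1 μ =>
    fun j : Fin n => Algebra.trace F E (p.1 * γ ^ ((j : ℕ) * p.2))

variable {F} {γ : E} {n μ : ℕ}

theorem syndrome_apply (z : ℕ) (v : Fin n → F) :
    syndrome F γ n z v = ∑ j, algebraMap F E (v j) * γ ^ ((j : ℕ) * z) := by
  simp [syndrome, Fintype.linearCombination_apply, Algebra.smul_def]

theorem mem_bchCode_iff {v : Fin n → F} :
    v ∈ bchCode F γ n μ ↔
      ∀ z, 1 ≤ z → z < μ → ∑ j, algebraMap F E (v j) * γ ^ ((j : ℕ) * z) = 0 := by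
  simp [bchCode, syndrome_apply]

theorem mem_traceCode_of_forall_dotProduct_eq_zero [Finite E] {b : Fin n → F}
    (hb : ∀ v ∈ bchCode F γ n μ, b ⬝ᵥ v = 0) : b ∈ traceCode F γ n μ := by
  have : Finite F := Finite.of_injective _ (algebraMap F E).injective
  have hφ := Module.Dual.mem_span_traceForm_comp (fun z : Set.Ico 1 μ => syndrome F γ n z)
    (φ := dotProductEquiv F (Fin n) b) fun v hv => hb v (Submodule.mem_iInf _ |>.2 hv)
  have hb' := Submodule.mem_map_of_mem (f := (dotProductEquiv F (Fin n)).symm.toLinearMap) hφ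
  rw [Submodule.map_span, ← Set.range_comp, LinearEquiv.coe_coe,
    LinearEquiv.symm_apply_apply] at hb'
  have hgen : (fun p : E × Set.Ico 1 μ => fun j : Fin n =>
      Algebra.trace F E (p.1 * γ ^ ((j : ℕ) * p.2))) = (dotProductEquiv F (Fin n)).symm ∘
        fun p => Algebra.traceForm F E p.1 ∘ₗ syndrome F γ n p.2 := by
    ext p j
    simp [syndrome_apply, Pi.single_apply]
  unfold traceCode
  rwa [hgen]

theorem trace_pow_mem_bchCode [Fintype F] [Fintype E] {q r : ℕ} (hF : Fintype.card F = q ^ 2)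
    (hE : Fintype.card E = q ^ (2 * r)) (hγ : IsPrimitiveRoot γ n)
    (hqr : (q ^ 2) ^ r ≡ 1 [MOD n]) (hn : μ * (q ^ r + 1) ≤ n) (β : E) {z : ℕ}
    (hz : z ∈ Set.Ico 1 μ) :
    (fun j : Fin n => Algebra.trace F E (β * γ ^ ((j : ℕ) * z)) ^ q) ∈ bchCode F γ n μ := by
  obtain ⟨σ, hσ⟩ := exists_ringHom_eq_pow_of_card_eq_sq F E hF
  have hr : Module.finrank F E = r := finrank_eq_of_card_eq_pow (by rw [hE, hF, pow_mul])
  have hq : 0 < q := Nat.pos_of_ne_zero (by rintro rfl; simp at hF)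
  rw [mem_bchCode_iff]
  intro z' hz' hz'μ
  calc ∑ j : Fin n,
        algebraMap F E (Algebra.trace F E (β * γ ^ ((j : ℕ) * z)) ^ q) * γ ^ ((j : ℕ) * z')
      = ∑ j : Fin n, ∑ i ∈ range r,
          σ β ^ (q ^ 2) ^ i * γ ^ ((j : ℕ) * (z * q ^ (2 * i + 1) + z')) := by
        refine sum_congr rfl fun j _ => ?_
        rw [map_pow, ← hσ, FiniteField.algebraMap_trace_eq_sum_pow, hr, Nat.card_eq_fintype_card,
          hF, map_sum, sum_mul]
        refine sum_congr rfl fun i _ => ?_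
        simp only [map_mul, map_pow, hσ γ]
        ring
    _ = ∑ i ∈ range r,
          σ β ^ (q ^ 2) ^ i * ∑ j : Fin n, γ ^ ((j : ℕ) * (z * q ^ (2 * i + 1) + z')) := by
        rw [sum_comm]
        simp_rw [mul_sum]
    _ = 0 := sum_eq_zero fun i hi => by
        rw [Fin.sum_univ_eq_sum_range (fun j => γ ^ (j * _)), hγ.sum_pow_mul_eq_zero, mul_zero]
        exact Nat.not_dvd_mul_pow_add hq hn (by rwa [← pow_mul] at hqr)
          (by simp at hi; omega) hz.1 hz.2 hz' hz'μ

theorem pow_mem_bchCode_of_mem_traceCode [Fintype F] [Fintype E] {q r : ℕ}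
    (hF : Fintype.card F = q ^ 2) (hE : Fintype.card E = q ^ (2 * r)) (hγ : IsPrimitiveRoot γ n)
    (hqr : (q ^ 2) ^ r ≡ 1 [MOD n]) (hn : μ * (q ^ r + 1) ≤ n) {b : Fin n → F}
    (hb : b ∈ traceCode F γ n μ) : (fun j => b j ^ q) ∈ bchCode F γ n μ := by
  obtain ⟨σ, hσ⟩ := exists_ringHom_eq_pow_of_card_eq_sq F F hF
  simp_rw [← hσ]
  induction hb using Submodule.span_induction with
  | mem b hb =>
    obtain ⟨⟨β, z, hz⟩, rfl⟩ := hb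
    simpa [hσ] using trace_pow_mem_bchCode hF hE hγ hqr hn β hz
  | zero => simpa [Pi.zero_def] using (bchCode F γ n μ).zero_mem
  | add b c _ _ hb hc => simpa [Pi.add_def] using add_mem hb hc
  | smul c b _ hb => simpa [Pi.smul_def] using (bchCode F γ n μ).smul_mem (σ c) hb

theorem pow_mem_bchCode_of_forall_dotProduct_eq_zero [Fintype F] [Fintype E] {q r : ℕ}
    (hF : Fintype.card F = q ^ 2) (hE : Fintype.card E = q ^ (2 * r)) (hγ : IsPrimitiveRoot γ n)
    (hqr : (q ^ 2) ^ r ≡ 1 [MOD n]) (hn : μ * (q ^ r + 1) ≤ n) {b : Fin n → F}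
    (hb : ∀ v ∈ bchCode F γ n μ, b ⬝ᵥ v = 0) : (fun j => b j ^ q) ∈ bchCode F γ n μ :=
  pow_mem_bchCode_of_mem_traceCode hF hE hγ hqr hn (mem_traceCode_of_forall_dotProduct_eq_zero hb)

end BCH

theorem convolutional_BCH_hermitian_self_orthogonal_general
    {F E : Type*} [Field F] [Fintype F]
    [Field E] [Fintype E] [Algebra F E]
    {q n r δ κ : ℕ}
    (hF : Fintype.card F = q ^ 2)
    (hr : 0 < r) (hr1 : (q ^ 2) ^ r ≡ 1 [MOD n])
    (hE : Fintype.card E = q ^ (2 * r))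
    (γ : E) (hγ : IsPrimitiveRoot γ n)
    (hδ2 : 2 * δ < n * (q ^ r - 1) / (q ^ (2 * r) - 1))
    (H0 H1 : Matrix (Fin κ) (Fin n) F)
    (hC : ∀ v : Fin n → F, (H0.mulVec v = 0 ∧ H1.mulVec v = 0) ↔
      (∀ z : ℕ, 1 ≤ z → z ≤ 2 * δ → ∑ j : Fin n, algebraMap F E (v j) * γ ^ ((j : ℕ) * z) = 0))
    (G : Matrix (Fin κ) (Fin n) (Polynomial F))
    (hG : G = H0.map Polynomial.C + H1.map (fun a => Polynomial.C a * Polynomial.X))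
    (u w : Fin κ → Polynomial F) :
    ∑ᶠ t : ℕ, ∑ j : Fin n,
      ((Matrix.vecMul u G) j).coeff t * (((Matrix.vecMul w G) j).coeff t) ^ q = 0 := by
  obtain ⟨σ, hσ⟩ := exists_ringHom_eq_pow_of_card_eq_sq F F hF
  have hqr : 1 < q ^ r :=
    Nat.one_lt_pow hr.ne' ((Nat.one_lt_pow_iff two_ne_zero).1 (hF ▸ Fintype.one_lt_card))
  have hn : (2 * δ + 1) * (q ^ r + 1) ≤ n := by
    rw [mul_comm 2 r, pow_mul, Nat.mul_sub_one_div_sq_sub_one hqr] at hδ2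
    exact (Nat.le_div_iff_mul_le (by omega)).1 hδ2
  have hcode : ∀ v, v ∈ bchCode F γ n (2 * δ + 1) ↔ H0.mulVec v = 0 ∧ H1.mulVec v = 0 :=
    fun v => by simp only [hC, mem_bchCode_iff, Nat.lt_add_one_iff]
  have hrows : ∀ a ∈ Set.range H0 ∪ Set.range H1, ∀ v ∈ bchCode F γ n (2 * δ + 1), a ⬝ᵥ v = 0 := by
    rintro _ (⟨i, rfl⟩ | ⟨i, rfl⟩) v hv
    · exact congrFun ((hcode v).1 hv).1 i
    · exact congrFun ((hcode v).1 hv).2 i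
  have horth : ∀ a ∈ Set.range H0 ∪ Set.range H1, ∀ b ∈ Set.range H0 ∪ Set.range H1,
      ∑ j, a j * σ (b j) = 0 := fun a ha b hb => by
    simpa [hσ, dotProduct] using hrows a ha _
      (pow_mem_bchCode_of_forall_dotProduct_eq_zero hF hE hγ hr1 hn (hrows b hb))
  subst hG
  refine finsum_eq_zero_of_forall_eq_zero fun t => ?_
  simpa [hσ] using sum_mul_map_eq_zero_of_mem_span σ horth
    (coeff_vecMul_mem_span_rows H0 H1 u t) (coeff_vecMul_mem_span_rows H0 H1 w t)

/-- **Hermitian self-orthogonality of the unit-memory convolutional BCH code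
over `𝔽_{q²}`.** If `2 ≤ 2δ < ⌊n(q^r − 1)/(q^{2r} − 1)⌋`, the convolutional
code `V` generated by `G(D) = H̃₀ + H̃₁ D`, obtained from a parity check
matrix of the narrow-sense BCH code over `𝔽_{q²}` of designed distance
`2δ+1`, is Hermitian self-orthogonal: any two codewords `v(D) = u(D)G(D)`
and `x(D) = w(D)G(D)` satisfy `∑ₜ ∑ⱼ v_{t,j} (x_{t,j})^q = 0`. -/
theorem convolutional_BCH_hermitian_self_orthogonal
    {F E : Type*} [Field F] [Fintype F]
    [Field E] [Fintype E] [Algebra F E]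
    {q n r δ κ : ℕ}
    (hq : ∃ p k : ℕ, p.Prime ∧ 0 < k ∧ q = p ^ k)
    (hF : Fintype.card F = q ^ 2)
    (hn : 0 < n) (hgcd : Nat.gcd n q = 1)
    (hr : 0 < r) (hr1 : (q ^ 2) ^ r ≡ 1 [MOD n])
    (hrmin : ∀ s : ℕ, 0 < s → (q ^ 2) ^ s ≡ 1 [MOD n] → r ≤ s)
    (hE : Fintype.card E = q ^ (2 * r))
    (γ : E) (hγ : IsPrimitiveRoot γ n)
    (hδ : 2 ≤ 2 * δ) (hδ2 : 2 * δ < n * (q ^ r - 1) / (q ^ (2 * r) - 1))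
    (hκ : 1 ≤ κ)
    (H0 H1 : Matrix (Fin κ) (Fin n) F)
    (hind : LinearIndependent F
      (fun p : {p : Fin 2 × Fin κ // (![H0, H1] p.1) p.2 ≠ 0} => (![H0, H1] p.1.1) p.1.2))
    (h0 : ∀ j : Fin κ, H0 j ≠ 0)
    (hC : ∀ v : Fin n → F, (H0.mulVec v = 0 ∧ H1.mulVec v = 0) ↔
      (∀ z : ℕ, 1 ≤ z → z ≤ 2 * δ → ∑ j : Fin n, algebraMap F E (v j) * γ ^ ((j : ℕ) * z) = 0))
    (G : Matrix (Fin κ) (Fin n) (Polynomial F))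
    (hG : G = H0.map Polynomial.C + H1.map (fun a => Polynomial.C a * Polynomial.X))
    (u w : Fin κ → Polynomial F) :
    ∑ᶠ t : ℕ, ∑ j : Fin n,
      ((Matrix.vecMul u G) j).coeff t * (((Matrix.vecMul w G) j).coeff t) ^ q = 0 :=
  convolutional_BCH_hermitian_self_orthogonal_general hF hr hr1 hE γ hγ hδ2 H0 H1 hC G hG u w
end
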